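/- arXiv:1310.2984 — 5 statements merged into one kernel-verified Lean document; each statement's English description precedes it below -/
import Mathlib

section
/- Let G be a graph in which every node has degree at most z, and let S be a specific set of t nodes. Then the number of node sets of size s that contain S and are a union of connected clusters, each cluster containing at least one node of S, is at most e^{t-1} · (z·e)^{s-t}, where e is the base of the natural logarithm. -/
/-!
Grow an ordering of a counted set `T` from the sorted list of `S`, always appending the least
vertex of `T` outside the list that is adjacent to it; such a vertex exists as long as the list
misses part of `T`, since every vertex of `T` is joined to `S` inside `T`. Record the `i`-th
appended vertex `v` by the pair (position in the list of the first neighbour `u` of `v`, rank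
of `v` among the at most `z` neighbours of `u`). This gives `m = s - t` distinct pairs in
`[0, s) × [0, z)`, and they determine `T`: if `T` and `T'` have the same pairs and the same list
so far, the pair of the next vertex of `T` points at a vertex of `T'` outside the list, and vice
versa, so by minimality both append the same vertex. Hence there are at most
`C(sz, m) ≤ (sz)^m / m!` sets, and `(m + 1)^m ≤ e^m m!` together with
`(1 + (t - 1)/(m + 1))^m ≤ e^(t - 1)` gives the bound.
-/

open Finset

namespace Real

open Nat

lemma add_pow_le_exp_mul_pow {x a : ℝ} (hx : 0 < x) (ha : 0 ≤ a) {n : ℕ}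
    (hn : (n : ℝ) ≤ x) :
    (x + a) ^ n ≤ exp a * x ^ n := by
  have hbase : x + a ≤ exp (a / x) * x := by
    have := add_one_le_exp (a / x)
    calc x + a = (a / x + 1) * x := by field_simp; ring
      _ ≤ exp (a / x) * x := by gcongr
  calc (x + a) ^ n ≤ (exp (a / x) * x) ^ n := by gcongr
    _ = exp (n * (a / x)) * x ^ n := by rw [mul_pow, ← exp_nat_mul]
    _ ≤ exp a * x ^ n := by
      gcongr
      calc (n : ℝ) * (a / x) ≤ x * (a / x) := by gcongr
        _ = a := by field_simp

lemma succ_pow_le_exp_pow_mul_factorial (n : ℕ) : ((n : ℝ) + 1) ^ n ≤ exp 1 ^ n * n ! := by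
  induction n with
  | zero => simp
  | succ n ih =>
    have hstep : ((n + 1 : ℝ) + 1) ^ (n + 1) ≤ exp 1 * (n + 1 : ℝ) ^ (n + 1) :=
      add_pow_le_exp_mul_pow (by positivity) zero_le_one (by push_cast; rfl)
    push_cast
    calc ((n : ℝ) + 1 + 1) ^ (n + 1) ≤ exp 1 * (n + 1 : ℝ) ^ (n + 1) := hstep
      _ = exp 1 * ((n + 1 : ℝ) * (n + 1 : ℝ) ^ n) := by ring
      _ ≤ exp 1 * ((n + 1 : ℝ) * (exp 1 ^ n * n !)) := by gcongr
      _ = exp 1 ^ (n + 1) * (n + 1 : ℕ) ! := by push_cast [factorial_succ]; ring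

lemma choose_mul_sub_le_exp (z s t : ℕ) (ht : 1 ≤ t) (hts : t ≤ s) :
    ((s * z).choose (s - t) : ℝ) ≤ exp 1 ^ (t - 1) * ((z : ℝ) * exp 1) ^ (s - t) := by
  obtain ⟨m, rfl⟩ := Nat.exists_eq_add_of_le hts
  obtain ⟨r, rfl⟩ := Nat.exists_eq_add_of_le' ht
  rw [Nat.add_sub_cancel_left, Nat.add_sub_cancel]
  have hs : ((r + 1 + m : ℕ) : ℝ) ^ m ≤ exp r * exp 1 ^ m * m ! :=
    calc ((r + 1 + m : ℕ) : ℝ) ^ m = ((m + 1 : ℝ) + r) ^ m := by push_cast; ring_nf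
      _ ≤ exp r * (m + 1 : ℝ) ^ m := add_pow_le_exp_mul_pow (by positivity)
          (by positivity) (by linarith)
      _ ≤ exp r * (exp 1 ^ m * m !) := by gcongr; exact succ_pow_le_exp_pow_mul_factorial m
      _ = exp r * exp 1 ^ m * m ! := by ring
  calc ((((r + 1 + m) * z).choose m : ℕ) : ℝ) ≤ (((r + 1 + m) * z : ℕ) : ℝ) ^ m / m ! :=
        choose_le_pow_div m _
    _ = ((r + 1 + m : ℕ) : ℝ) ^ m * (z : ℝ) ^ m / m ! := by rw [Nat.cast_mul, mul_pow]
    _ ≤ exp r * exp 1 ^ m * m ! * (z : ℝ) ^ m / m ! := by gcongr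
    _ = exp 1 ^ r * ((z : ℝ) * exp 1) ^ m := by
      rw [← exp_one_pow]; field_simp; ring

end Real

namespace SimpleGraph

variable {V : Type*} (G : SimpleGraph V)

def IsAnchored (S T : Finset V) : Prop :=
  S ⊆ T ∧ ∀ x ∈ T, ∃ y ∈ S, ∃ w : G.Walk x y, ∀ v ∈ w.support, v ∈ T

section Exploration

variable [LinearOrder V] [DecidableRel G.Adj]

def exploreFrontier (T : Finset V) (L : List V) : Finset V :=
  {v ∈ T | v ∉ L ∧ ∃ u ∈ L, G.Adj u v}

noncomputable def exploreStep (T : Finset V) (L : List V) : List V :=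
  if h : (G.exploreFrontier T L).Nonempty then L ++ [(G.exploreFrontier T L).min' h] else L

noncomputable def exploreList (T S : Finset V) (i : ℕ) : List V :=
  (G.exploreStep T)^[i] S.sort

variable {G} {S T : Finset V} {i j m : ℕ}

lemma exploreFrontier_nonempty {L : List V} (hT : G.IsAnchored S T) (hSL : ∀ a ∈ S, a ∈ L)
    {x : V} (hxT : x ∈ T) (hxL : x ∉ L) : (G.exploreFrontier T L).Nonempty := by
  obtain ⟨y, hyS, w, hw⟩ := hT.2 x hxT
  obtain ⟨d, hd, hdL, hdL'⟩ :=
    w.reverse.exists_boundary_dart {a | a ∈ L} (hSL y hyS) hxL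
  have hdT : d.snd ∈ T := hw _ (by simpa using w.reverse.dart_snd_mem_support_of_mem_darts hd)
  exact ⟨d.snd, mem_filter.mpr ⟨hdT, hdL', d.fst, hdL, d.adj⟩⟩

lemma exploreList_succ (T S : Finset V) (i : ℕ) :
    G.exploreList T S (i + 1) = G.exploreStep T (G.exploreList T S i) :=
  Function.iterate_succ_apply' _ _ _

lemma exploreList_prefix (h : i ≤ j) : G.exploreList T S i <+: G.exploreList T S j := by
  induction j, h using Nat.le_induction with
  | base => exact List.prefix_rfl
  | succ j _ ih =>
    refine ih.trans ?_
    rw [exploreList_succ, exploreStep]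
    split_ifs
    exacts [List.prefix_append _ _, List.prefix_rfl]

lemma exploreList_nodup : (G.exploreList T S i).Nodup := by
  induction i with
  | zero => exact S.sort_nodup _
  | succ i ih =>
    rw [exploreList_succ, exploreStep]
    split_ifs with h
    · rw [← List.concat_eq_append, List.nodup_concat]
      exact ⟨(mem_filter.mp ((G.exploreFrontier T _).min'_mem h)).2.1, ih⟩
    · exact ih

lemma mem_exploreList_of_mem {x : V} (hx : x ∈ S) : x ∈ G.exploreList T S i :=
  (exploreList_prefix (Nat.zero_le i)).subset ((S.mem_sort _).mpr hx)

lemma mem_of_mem_exploreList (hST : S ⊆ T) {x : V} (hx : x ∈ G.exploreList T S i) :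
    x ∈ T := by
  induction i with
  | zero => exact hST ((S.mem_sort _).mp hx)
  | succ i ih =>
    rw [exploreList_succ, exploreStep] at hx
    split_ifs at hx with h
    · rcases List.mem_append.mp hx with hx | hx
      · exact ih hx
      · exact (mem_filter.mp (List.mem_singleton.mp hx ▸ (G.exploreFrontier T _).min'_mem h)).1
    · exact ih hx

lemma exploreFrontier_exploreList_nonempty (hT : G.IsAnchored S T)
    (hlt : (G.exploreList T S i).length < T.card) :
    (G.exploreFrontier T (G.exploreList T S i)).Nonempty := by
  obtain ⟨x, hxT, hxL⟩ :=
    exists_mem_notMem_of_card_lt_card (s := (G.exploreList T S i).toFinset) (t := T)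
      (by rwa [List.toFinset_card_of_nodup exploreList_nodup])
  exact exploreFrontier_nonempty hT (fun a ha => mem_exploreList_of_mem ha) hxT
    (fun h => hxL (List.mem_toFinset.mpr h))

lemma length_exploreList (hT : G.IsAnchored S T) (hi : S.card + i ≤ T.card) :
    (G.exploreList T S i).length = S.card + i := by
  induction i with
  | zero => exact S.length_sort _
  | succ i ih =>
    have ih := ih (by omega)
    rw [exploreList_succ, exploreStep,
      dif_pos (exploreFrontier_exploreList_nonempty hT (by omega)), List.length_append,
      List.length_singleton]
    omega

lemma exploreList_toFinset (hT : G.IsAnchored S T) (hm : T.card = S.card + m) :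
    (G.exploreList T S m).toFinset = T :=
  eq_of_subset_of_card_le (fun x hx => mem_of_mem_exploreList hT.1 (List.mem_toFinset.mp hx))
    (by rw [List.toFinset_card_of_nodup exploreList_nodup, length_exploreList hT hm.ge, hm])

lemma exploreList_getD_eq {p : ℕ} (d : V) (hi : p < (G.exploreList T S i).length)
    (hj : p < (G.exploreList T S j).length) :
    (G.exploreList T S i).getD p d = (G.exploreList T S j).getD p d := by
  rw [List.getD_eq_getElem _ _ hi, List.getD_eq_getElem _ _ hj]
  rcases le_total i j with h | h
  · exact (exploreList_prefix h).getElem hi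
  · exact ((exploreList_prefix h).getElem hj).symm

section Next

variable [Inhabited V]

-- The `default` branch is only taken once the list already exhausts `T`.
variable (G) in
noncomputable def exploreNext (T S : Finset V) (i : ℕ) : V :=
  if h : (G.exploreFrontier T (G.exploreList T S i)).Nonempty then
    (G.exploreFrontier T (G.exploreList T S i)).min' h else default

variable (G) in
noncomputable def exploreParentPos (T S : Finset V) (i : ℕ) : ℕ :=
  (G.exploreList T S i).findIdx (G.Adj · (G.exploreNext T S i))

variable (G) in
noncomputable def exploreParent (T S : Finset V) (i : ℕ) : V :=
  (G.exploreList T S i).getD (G.exploreParentPos T S i) default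

lemma exploreList_succ_eq_append (hT : G.IsAnchored S T) (hi : S.card + i < T.card) :
    G.exploreList T S (i + 1) = G.exploreList T S i ++ [G.exploreNext T S i] := by
  have h := exploreFrontier_exploreList_nonempty hT (by rwa [length_exploreList hT hi.le])
  rw [exploreList_succ, exploreStep, exploreNext, dif_pos h, dif_pos h]

lemma exploreNext_mem_exploreFrontier (hT : G.IsAnchored S T) (hi : S.card + i < T.card) :
    G.exploreNext T S i ∈ G.exploreFrontier T (G.exploreList T S i) := by
  have h := exploreFrontier_exploreList_nonempty hT (by rwa [length_exploreList hT hi.le])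
  rw [exploreNext, dif_pos h]
  exact min'_mem _ h

lemma exploreNext_le {v : V} (hv : v ∈ G.exploreFrontier T (G.exploreList T S i)) :
    G.exploreNext T S i ≤ v := by
  rw [exploreNext, dif_pos ⟨v, hv⟩]
  exact min'_le _ _ hv

lemma exploreNext_mem_exploreList (hT : G.IsAnchored S T) (hi : S.card + i < T.card)
    (hij : i < j) : G.exploreNext T S i ∈ G.exploreList T S j :=
  (exploreList_prefix hij).subset (by simp [exploreList_succ_eq_append hT hi])

lemma exploreNext_injOn (hT : G.IsAnchored S T) (hm : T.card = S.card + m) :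
    Set.InjOn (G.exploreNext T S) (range m) := by
  have key : ∀ i j, i < j → j < m → G.exploreNext T S i ≠ G.exploreNext T S j := by
    intro i j hij hj h
    have hi : G.exploreNext T S i ∈ G.exploreList T S j :=
      exploreNext_mem_exploreList hT (by omega) hij
    exact (mem_filter.mp (exploreNext_mem_exploreFrontier hT (by omega))).2.1 (h ▸ hi)
  intro i hi j hj h
  simp only [coe_range, Set.mem_Iio] at hi hj
  rcases lt_trichotomy i j with hij | hij | hij
  exacts [absurd h (key i j hij hj), hij, absurd h.symm (key j i hij hi)]

lemma exploreParentPos_lt (hT : G.IsAnchored S T) (hi : S.card + i < T.card) :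
    G.exploreParentPos T S i < (G.exploreList T S i).length := by
  obtain ⟨-, -, u, hu, hadj⟩ := mem_filter.mp (exploreNext_mem_exploreFrontier hT hi)
  exact List.findIdx_lt_length_of_exists ⟨u, hu, by simpa using hadj⟩

lemma adj_exploreParent (hT : G.IsAnchored S T) (hi : S.card + i < T.card) :
    G.Adj (G.exploreParent T S i) (G.exploreNext T S i) := by
  have h := exploreParentPos_lt hT hi
  rw [exploreParent, List.getD_eq_getElem _ _ h]
  exact of_decide_eq_true (List.findIdx_getElem (w := h))

lemma getD_exploreParentPos (hT : G.IsAnchored S T) (hi : S.card + i < T.card)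
    (hj : G.exploreParentPos T S i < (G.exploreList T S j).length) :
    (G.exploreList T S j).getD (G.exploreParentPos T S i) default = G.exploreParent T S i :=
  exploreList_getD_eq _ hj (exploreParentPos_lt hT hi)

section Code

variable [Fintype V]

variable (G) in
def nthNeighbor (u : V) (k : ℕ) : V := ((G.neighborFinset u).sort).getD k default

variable (G) in
noncomputable def exploreChildIdx (T S : Finset V) (i : ℕ) : ℕ :=
  ((G.neighborFinset (G.exploreParent T S i)).sort).idxOf (G.exploreNext T S i)

variable (G) in
noncomputable def exploreCode (T S : Finset V) (m : ℕ) : Finset (ℕ × ℕ) :=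
  (range m).image fun i => (G.exploreParentPos T S i, G.exploreChildIdx T S i)

lemma exploreChildIdx_lt_degree (hT : G.IsAnchored S T) (hi : S.card + i < T.card) :
    G.exploreChildIdx T S i < G.degree (G.exploreParent T S i) := by
  rw [exploreChildIdx, ← card_neighborFinset_eq_degree, ← length_sort (· ≤ ·),
    List.idxOf_lt_length_iff, mem_sort, mem_neighborFinset]
  exact adj_exploreParent hT hi

lemma nthNeighbor_exploreChildIdx (hT : G.IsAnchored S T) (hi : S.card + i < T.card) :
    G.nthNeighbor (G.exploreParent T S i) (G.exploreChildIdx T S i) = G.exploreNext T S i := by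
  have h := exploreChildIdx_lt_degree hT hi
  rw [← card_neighborFinset_eq_degree, ← length_sort (· ≤ ·)] at h
  rw [nthNeighbor, List.getD_eq_getElem _ _ h]
  exact List.getElem_idxOf h

lemma nthNeighbor_getD_exploreParentPos (hT : G.IsAnchored S T) (hi : S.card + i < T.card)
    (hj : G.exploreParentPos T S i < (G.exploreList T S j).length) :
    G.nthNeighbor ((G.exploreList T S j).getD (G.exploreParentPos T S i) default)
      (G.exploreChildIdx T S i) = G.exploreNext T S i := by
  rw [getD_exploreParentPos hT hi hj, nthNeighbor_exploreChildIdx hT hi]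

lemma exploreCode_subset {z : ℕ} (hdeg : ∀ v, G.degree v ≤ z) (hT : G.IsAnchored S T)
    (hm : T.card = S.card + m) : G.exploreCode T S m ⊆ range T.card ×ˢ range z := by
  simp only [exploreCode, image_subset_iff, mem_range, mem_product]
  intro i hi
  have hi' : S.card + i < T.card := by omega
  have := exploreParentPos_lt hT hi'
  rw [length_exploreList hT hi'.le] at this
  exact ⟨by omega, (exploreChildIdx_lt_degree hT hi').trans_le (hdeg _)⟩

lemma card_exploreCode (hT : G.IsAnchored S T) (hm : T.card = S.card + m) :
    (G.exploreCode T S m).card = m := by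
  rw [exploreCode, card_image_of_injOn, card_range]
  refine Set.InjOn.of_comp
    (g := fun pk => G.nthNeighbor ((G.exploreList T S m).getD pk.1 default) pk.2)
    ((exploreNext_injOn hT hm).congr fun i hi => ?_)
  have hi : S.card + i < T.card := by rw [coe_range, Set.mem_Iio] at hi; omega
  exact (nthNeighbor_getD_exploreParentPos hT hi ((exploreParentPos_lt hT hi).trans_le
    (exploreList_prefix (by omega)).length_le)).symm

lemma mem_exploreFrontier_of_mem_exploreCode (hT : G.IsAnchored S T)
    (hm : T.card = S.card + m) {p k : ℕ} (hpk : (p, k) ∈ G.exploreCode T S m)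
    (hp : p < (G.exploreList T S i).length)
    (hv : G.nthNeighbor ((G.exploreList T S i).getD p default) k ∉ G.exploreList T S i) :
    G.nthNeighbor ((G.exploreList T S i).getD p default) k ∈
      G.exploreFrontier T (G.exploreList T S i) := by
  obtain ⟨j, hj, hjpk⟩ := mem_image.mp hpk
  obtain ⟨rfl, rfl⟩ := Prod.mk.inj hjpk
  have hj : S.card + j < T.card := by rw [mem_range] at hj; omega
  have hparent := getD_exploreParentPos hT hj hp
  rw [hparent, nthNeighbor_exploreChildIdx hT hj] at hv ⊢
  refine mem_filter.mpr ⟨(mem_filter.mp (exploreNext_mem_exploreFrontier hT hj)).1, hv,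
    G.exploreParent T S j, ?_, adj_exploreParent hT hj⟩
  rw [← hparent, List.getD_eq_getElem _ _ hp]
  exact List.getElem_mem hp

lemma exploreNext_le_of_exploreCode_subset {T' : Finset V} (hT : G.IsAnchored S T)
    (hm : T.card = S.card + m) (hT' : G.IsAnchored S T') (hm' : T'.card = S.card + m)
    (hi : i < m) (hL : G.exploreList T' S i = G.exploreList T S i)
    (hcode : G.exploreCode T S m ⊆ G.exploreCode T' S m) :
    G.exploreNext T' S i ≤ G.exploreNext T S i := by
  have hi' : S.card + i < T.card := by omega
  have hpk : (G.exploreParentPos T S i, G.exploreChildIdx T S i) ∈ G.exploreCode T' S m :=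
    hcode (mem_image_of_mem _ (mem_range.mpr hi))
  have hp := exploreParentPos_lt hT hi'
  have hv := nthNeighbor_getD_exploreParentPos hT hi' hp
  have hvL := (mem_filter.mp (exploreNext_mem_exploreFrontier hT hi')).2.1
  rw [← hL] at hp hv hvL
  apply exploreNext_le
  rw [← hv] at hvL ⊢
  exact mem_exploreFrontier_of_mem_exploreCode hT' hm' hpk hp hvL

lemma exploreList_eq_of_exploreCode_eq {T' : Finset V} (hT : G.IsAnchored S T)
    (hm : T.card = S.card + m) (hT' : G.IsAnchored S T') (hm' : T'.card = S.card + m)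
    (hcode : G.exploreCode T S m = G.exploreCode T' S m) (hi : i ≤ m) :
    G.exploreList T S i = G.exploreList T' S i := by
  induction i with
  | zero => rfl
  | succ i ih =>
    have hL := ih (by omega)
    have hnext : G.exploreNext T S i = G.exploreNext T' S i :=
      le_antisymm
        (exploreNext_le_of_exploreCode_subset hT' hm' hT hm (by omega) hL hcode.ge)
        (exploreNext_le_of_exploreCode_subset hT hm hT' hm' (by omega) hL.symm hcode.le)
    rw [exploreList_succ_eq_append hT (by omega), exploreList_succ_eq_append hT' (by omega),
      hL, hnext]

lemma eq_of_exploreCode_eq {T' : Finset V} (hT : G.IsAnchored S T)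
    (hm : T.card = S.card + m) (hT' : G.IsAnchored S T') (hm' : T'.card = S.card + m)
    (hcode : G.exploreCode T S m = G.exploreCode T' S m) : T = T' := by
  rw [← exploreList_toFinset hT hm, ← exploreList_toFinset hT' hm',
    exploreList_eq_of_exploreCode_eq hT hm hT' hm' hcode le_rfl]

end Code

end Next

end Exploration

theorem ncard_isAnchored_le_choose [Fintype V] [LinearOrder V] [Inhabited V]
    [DecidableRel G.Adj]
    {z : ℕ} (hdeg : ∀ v, G.degree v ≤ z) (S : Finset V) (s : ℕ) :
    {T : Finset V | G.IsAnchored S T ∧ T.card = s}.ncard ≤ (s * z).choose (s - S.card) := by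
  set m := s - S.card
  set codes : Finset (Finset (ℕ × ℕ)) := (range s ×ˢ range z).powersetCard m
  calc {T : Finset V | G.IsAnchored S T ∧ T.card = s}.ncard
      ≤ (codes : Set (Finset (ℕ × ℕ))).ncard := by
        refine Set.ncard_le_ncard_of_injOn (G.exploreCode · S m) ?_ ?_ codes.finite_toSet
        · rintro T ⟨hT, rfl⟩
          have := card_le_card hT.1
          exact mem_powersetCard.mpr ⟨exploreCode_subset hdeg hT (by omega),
            card_exploreCode hT (by omega)⟩
        · rintro T ⟨hT, hTs⟩ T' ⟨hT', hT's⟩ hcode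
          have := card_le_card hT.1
          exact eq_of_exploreCode_eq hT (by omega) hT' (by omega) hcode
    _ = (s * z).choose m := by
        rw [Set.ncard_coe_finset, card_powersetCard, card_product, card_range, card_range]

end SimpleGraph

theorem cluster_union_count_general {V : Type*} [Fintype V]
    (G : SimpleGraph V) [DecidableRel G.Adj] (z : ℕ)
    (hdeg : ∀ v, G.degree v ≤ z)
    (S : Finset V) (t s : ℕ) (hS : S.card = t) (ht : 1 ≤ t) (hts : t ≤ s) :
    ({T : Finset V | S ⊆ T ∧ T.card = s ∧
        ∀ x ∈ T, ∃ y ∈ S, ∃ w : G.Walk x y, ∀ v ∈ w.support, v ∈ T}.ncard : ℝ)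
      ≤ Real.exp 1 ^ (t - 1) * ((z : ℝ) * Real.exp 1) ^ (s - t) := by
  obtain ⟨v₀, -⟩ := card_pos.mp (hS ▸ ht : 0 < S.card)
  let : Inhabited V := ⟨v₀⟩
  let : LinearOrder V := LinearOrder.lift' _ (Fintype.equivFin V).injective
  have hfamily : {T : Finset V | S ⊆ T ∧ T.card = s ∧
      ∀ x ∈ T, ∃ y ∈ S, ∃ w : G.Walk x y, ∀ v ∈ w.support, v ∈ T} =
      {T | G.IsAnchored S T ∧ T.card = s} := by
    ext T
    simp only [SimpleGraph.IsAnchored, Set.mem_ofPred_eq]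
    tauto
  subst hS
  calc _ ≤ ((s * z).choose (s - S.card) : ℝ) := by
        rw [hfamily]; exact_mod_cast G.ncard_isAnchored_le_choose hdeg S s
    _ ≤ _ := Real.choose_mul_sub_le_exp z s S.card ht hts

/-- Lemma 5 of AGP08 (cluster counting): in a graph of maximum degree `z`, the
number of vertex sets of size `s` containing a fixed set `S` of `t` vertices,
such that every vertex is connected within the set to some vertex of `S`,
is at most `e^(t-1) * (z e)^(s-t)`. -/
theorem cluster_union_count {V : Type*} [Fintype V] [DecidableEq V]
    (G : SimpleGraph V) [DecidableRel G.Adj] (z : ℕ) (hz : 1 ≤ z)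
    (hdeg : ∀ v, G.degree v ≤ z)
    (S : Finset V) (t s : ℕ) (hS : S.card = t) (ht : 1 ≤ t) (hts : t ≤ s) :
    ({T : Finset V | S ⊆ T ∧ T.card = s ∧
        ∀ x ∈ T, ∃ y ∈ S, ∃ w : G.Walk x y, ∀ v ∈ w.support, v ∈ T}.ncard : ℝ)
      ≤ Real.exp 1 ^ (t - 1) * ((z : ℝ) * Real.exp 1) ^ (s - t) :=
  cluster_union_count_general G z hdeg S t s hS ht hts
end

section
/- In a graph with maximum degree z, the number of connected node sets of size s containing a fixed node v is at most (z·e)^{s-1}. -/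
/-!
Explore a connected set `T ∋ v` one vertex at a time, always adding the smallest vertex of `T`
adjacent to the part explored so far. Every vertex other than `v` is recorded as the pair
(exploration index of its first explored neighbour, label of the vertex among that neighbour's
at most `z` neighbours). Given the code, the exploration can be replayed without knowing `T`, so
`T` is determined by a set of `s - 1` pairs in `[0, s - 1) × [0, z)`. Hence there are at most
`C((s - 1) z, s - 1) ≤ ((s - 1) z)^(s - 1) / (s - 1)! ≤ (z e)^(s - 1)` such sets.
-/

namespace ClusterCount

open Finset SimpleGraph

variable {V : Type*} (G : SimpleGraph V) (v : V)

def IsCluster (T : Finset V) : Prop :=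
  v ∈ T ∧ ∀ x ∈ T, ∃ w : G.Walk x v, ∀ u ∈ w.support, u ∈ T

variable {G v} in
theorem IsCluster.exists_adj_of_not_subset {T A : Finset V} (hT : IsCluster G v T)
    (hvA : v ∈ A) (hTA : ¬ T ⊆ A) : ∃ a ∈ A, ∃ w ∈ T, w ∉ A ∧ G.Adj a w := by
  obtain ⟨x, hxT, hxA⟩ := not_subset.1 hTA
  obtain ⟨p, hp⟩ := hT.2 x hxT
  obtain ⟨d, hd, hdA, hdA'⟩ := p.reverse.exists_boundary_dart (A : Set V) hvA hxA
  refine ⟨d.fst, hdA, d.snd, hp _ ?_, hdA', d.adj⟩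
  simpa using p.reverse.dart_snd_mem_support_of_mem_darts hd

theorem exists_neighbor_labelling [Fintype V] [DecidableRel G.Adj] {z : ℕ}
    (hdeg : ∀ u, G.degree u ≤ z) :
    ∃ ℓ : V → V → ℕ,
      (∀ a, Set.InjOn (ℓ a) (G.neighborSet a)) ∧ ∀ a w, G.Adj a w → ℓ a w < z := by
  classical
  have e : ∀ a, G.neighborSet a ↪ Fin z := fun a =>
    (Function.Embedding.nonempty_of_card_le
      (by rw [Fintype.card_fin, card_neighborSet_eq_degree]; exact hdeg a)).some
  refine ⟨fun a w => if h : G.Adj a w then e a ⟨w, h⟩ else 0, fun a w hw w' hw' h => ?_,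
    fun a w h => by simp [h]⟩
  rw [mem_neighborSet] at hw hw'
  exact congrArg Subtype.val
    (show (⟨w, hw⟩ : G.neighborSet a) = ⟨w', hw'⟩ by simpa [hw, hw', Fin.val_inj] using h)

section Exploration

variable [LinearOrder V] [DecidableRel G.Adj] (T : Finset V)

def frontier (A : Finset V) : Finset V :=
  {w ∈ T \ A | ∃ a ∈ A, G.Adj a w}

def next (A : Finset V) : V :=
  if h : (frontier G T A).Nonempty then (frontier G T A).min' h else v

def explored : ℕ → Finset V
  | 0 => {v}
  | i + 1 => insert (next G v T (explored i)) (explored i)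

def visit : ℕ → V
  | 0 => v
  | i + 1 => next G v T (explored G v T i)

variable {G T} in
theorem mem_frontier {A : Finset V} {w : V} :
    w ∈ frontier G T A ↔ (w ∈ T ∧ w ∉ A) ∧ ∃ a ∈ A, G.Adj a w := by
  simp [frontier]

theorem explored_succ (i : ℕ) :
    explored G v T (i + 1) = insert (visit G v T (i + 1)) (explored G v T i) := rfl

theorem explored_eq_image (i : ℕ) : explored G v T i = (range (i + 1)).image (visit G v T) := by
  induction i with
  | zero => rfl
  | succ i ih => rw [explored_succ, ih, range_add_one (n := i + 1), image_insert]

theorem visit_mem_explored {i j : ℕ} (h : j ≤ i) : visit G v T j ∈ explored G v T i := by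
  rw [explored_eq_image]
  exact mem_image_of_mem _ (mem_range.2 (Nat.lt_succ_of_le h))

theorem next_mem_frontier (hT : IsCluster G v T) {A : Finset V} (hvA : v ∈ A)
    (hTA : ¬ T ⊆ A) : next G v T A ∈ frontier G T A := by
  obtain ⟨a, ha, w, hwT, hwA, haw⟩ := hT.exists_adj_of_not_subset hvA hTA
  have hne : (frontier G T A).Nonempty := ⟨w, mem_frontier.2 ⟨⟨hwT, hwA⟩, a, ha, haw⟩⟩
  rw [next, dif_pos hne]
  exact min'_mem _ hne

theorem next_mem (hvT : v ∈ T) (A : Finset V) : next G v T A ∈ T := by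
  unfold next
  split_ifs with h
  · exact (mem_frontier.1 (min'_mem _ h)).1.1
  · exact hvT

theorem explored_subset (hvT : v ∈ T) (i : ℕ) : explored G v T i ⊆ T := by
  induction i with
  | zero => simpa [explored]
  | succ i ih => exact insert_subset (next_mem G v T hvT _) ih

theorem card_explored (hT : IsCluster G v T) {i : ℕ} (hi : i < #T) :
    #(explored G v T i) = i + 1 := by
  induction i with
  | zero => rfl
  | succ i ih =>
    have ih := ih (by omega)
    have hTA : ¬ T ⊆ explored G v T i := fun h => by
      have := card_le_card h
      omega
    have hnext := next_mem_frontier G v T hT (visit_mem_explored G v T (Nat.zero_le i)) hTA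
    rw [explored, card_insert_of_notMem (mem_frontier.1 hnext).1.2, ih]

theorem visit_succ_mem_frontier (hT : IsCluster G v T) {i : ℕ} (hi : i + 1 < #T) :
    visit G v T (i + 1) ∈ frontier G T (explored G v T i) := by
  refine next_mem_frontier G v T hT (visit_mem_explored G v T (Nat.zero_le i)) fun h => ?_
  have := card_le_card h
  rw [card_explored G v T hT (by omega)] at this
  omega

theorem image_visit_range_card (hT : IsCluster G v T) : (range #T).image (visit G v T) = T := by
  have hpos : 0 < #T := card_pos.2 ⟨v, hT.1⟩
  have hexp : explored G v T (#T - 1) = T :=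
    eq_of_subset_of_card_le (explored_subset G v T hT.1 _)
      (by rw [card_explored G v T hT (by omega)]; omega)
  rw [explored_eq_image, Nat.sub_add_cancel hpos] at hexp
  exact hexp

theorem visit_mem (hT : IsCluster G v T) {k : ℕ} (hk : k < #T) : visit G v T k ∈ T := by
  have hk := mem_image_of_mem (visit G v T) (mem_range.2 hk)
  rwa [image_visit_range_card G v T hT] at hk

theorem visit_injOn (hT : IsCluster G v T) : Set.InjOn (visit G v T) (range #T) :=
  card_image_iff.1 (by rw [image_visit_range_card G v T hT, card_range])

def parentIndex (k : ℕ) : ℕ :=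
  if h : ∃ j < k, G.Adj (visit G v T j) (visit G v T k) then Nat.find h else 0

theorem parentIndex_le {j k : ℕ} (hjk : j < k) (h : G.Adj (visit G v T j) (visit G v T k)) :
    parentIndex G v T k ≤ j := by
  rw [parentIndex, dif_pos ⟨j, hjk, h⟩]
  exact Nat.find_min' _ ⟨hjk, h⟩

theorem exists_adj_visit_lt (hT : IsCluster G v T) {k : ℕ} (h1 : 1 ≤ k) (hk : k < #T) :
    ∃ j < k, G.Adj (visit G v T j) (visit G v T k) := by
  obtain ⟨i, rfl⟩ : ∃ i, k = i + 1 := ⟨k - 1, by omega⟩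
  obtain ⟨-, a, ha, hadj⟩ := mem_frontier.1 (visit_succ_mem_frontier G v T hT hk)
  rw [explored_eq_image] at ha
  obtain ⟨j, hj, rfl⟩ := mem_image.1 ha
  exact ⟨j, mem_range.1 hj, hadj⟩

theorem parentIndex_lt (hT : IsCluster G v T) {k : ℕ} (h1 : 1 ≤ k) (hk : k < #T) :
    parentIndex G v T k < k :=
  have ⟨_, hj, hadj⟩ := exists_adj_visit_lt G v T hT h1 hk
  (parentIndex_le G v T hj hadj).trans_lt hj

theorem visit_parent_adj (hT : IsCluster G v T) {k : ℕ} (h1 : 1 ≤ k) (hk : k < #T) :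
    G.Adj (visit G v T (parentIndex G v T k)) (visit G v T k) := by
  have h := exists_adj_visit_lt G v T hT h1 hk
  rw [parentIndex, dif_pos h]
  exact (Nat.find_spec h).2

section Code

variable (ℓ : V → V → ℕ)

def codeEntry (k : ℕ) : ℕ × ℕ :=
  (parentIndex G v T k, ℓ (visit G v T (parentIndex G v T k)) (visit G v T k))

def code : Finset (ℕ × ℕ) :=
  (Ico 1 #T).image (codeEntry G v T ℓ)

variable {ℓ}

theorem codeEntry_injOn (hℓ : ∀ a, Set.InjOn (ℓ a) (G.neighborSet a)) (hT : IsCluster G v T) :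
    Set.InjOn (codeEntry G v T ℓ) (Ico 1 #T) := by
  intro k hk k' hk' h
  rw [coe_Ico, Set.mem_Ico] at hk hk'
  obtain ⟨hp, hl⟩ := Prod.mk.inj h
  rw [hp] at hl
  have hadj := visit_parent_adj G v T hT hk.1 hk.2
  rw [hp] at hadj
  exact visit_injOn G v T hT (mem_range.2 hk.2) (mem_range.2 hk'.2)
    (hℓ _ hadj (visit_parent_adj G v T hT hk'.1 hk'.2) hl)

theorem card_code (hℓ : ∀ a, Set.InjOn (ℓ a) (G.neighborSet a)) (hT : IsCluster G v T) :
    #(code G v T ℓ) = #T - 1 := by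
  rw [code, card_image_of_injOn (codeEntry_injOn G v T hℓ hT), Nat.card_Ico]

theorem code_subset {z : ℕ} (hℓz : ∀ a w, G.Adj a w → ℓ a w < z) (hT : IsCluster G v T) :
    code G v T ℓ ⊆ range (#T - 1) ×ˢ range z := by
  intro p hp
  obtain ⟨k, hk, rfl⟩ := mem_image.1 hp
  rw [mem_Ico] at hk
  have := parentIndex_lt G v T hT hk.1 hk.2
  rw [codeEntry, mem_product, mem_range, mem_range]
  exact ⟨by omega, hℓz _ _ (visit_parent_adj G v T hT hk.1 hk.2)⟩

theorem mem_frontier_explored_iff (hℓ : ∀ a, Set.InjOn (ℓ a) (G.neighborSet a))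
    (hT : IsCluster G v T) {i : ℕ} {w : V} :
    w ∈ frontier G T (explored G v T i) ↔ w ∉ explored G v T i ∧
      ∃ j ≤ i, G.Adj (visit G v T j) w ∧ (j, ℓ (visit G v T j) w) ∈ code G v T ℓ := by
  constructor
  · intro hw
    obtain ⟨⟨hwT, hwA⟩, a, ha, haw⟩ := mem_frontier.1 hw
    rw [← image_visit_range_card G v T hT] at hwT
    obtain ⟨k, hk, rfl⟩ := mem_image.1 hwT
    rw [explored_eq_image] at ha
    obtain ⟨j, hj, rfl⟩ := mem_image.1 ha
    have hik : i < k := lt_of_not_ge fun hki => hwA (visit_mem_explored G v T hki)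
    rw [mem_range] at hj hk
    refine ⟨hwA, parentIndex G v T k, ?_, visit_parent_adj G v T hT (by omega) hk,
      mem_image.2 ⟨k, mem_Ico.2 ⟨by omega, hk⟩, rfl⟩⟩
    have := parentIndex_le G v T (by omega) haw
    omega
  · rintro ⟨hwA, j, hji, hjw, hc⟩
    obtain ⟨k, hk, he⟩ := mem_image.1 hc
    rw [mem_Ico] at hk
    obtain ⟨rfl, hl⟩ := Prod.mk.inj he
    have hkw : visit G v T k = w := hℓ _ (visit_parent_adj G v T hT hk.1 hk.2) hjw hl
    subst hkw
    exact mem_frontier.2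
      ⟨⟨visit_mem G v T hT hk.2, hwA⟩, _, visit_mem_explored G v T hji, hjw⟩

theorem eq_of_code_eq (hℓ : ∀ a, Set.InjOn (ℓ a) (G.neighborSet a)) {T' : Finset V}
    (hT : IsCluster G v T) (hT' : IsCluster G v T') (h : code G v T ℓ = code G v T' ℓ) :
    T = T' := by
  have hcard : #T = #T' := by
    have := card_code G v T hℓ hT
    rw [h, card_code G v T' hℓ hT'] at this
    have := card_pos.2 ⟨v, hT.1⟩
    have := card_pos.2 ⟨v, hT'.1⟩
    omega
  have hvisit : ∀ k, visit G v T k = visit G v T' k := by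
    intro k
    induction k using Nat.strong_induction_on with
    | _ k ih =>
      cases k with
      | zero => rfl
      | succ i =>
        have hexp : explored G v T i = explored G v T' i := by
          rw [explored_eq_image, explored_eq_image]
          exact image_congr fun j hj => ih j (mem_range.1 hj)
        have hfr : frontier G T (explored G v T i) = frontier G T' (explored G v T' i) := by
          ext w
          rw [mem_frontier_explored_iff G v T hℓ hT, mem_frontier_explored_iff G v T' hℓ hT', h,
            hexp]
          refine and_congr_right fun _ => exists_congr fun j => and_congr_right fun hj => ?_
          rw [ih j (by omega)]
        change next G v T (explored G v T i) = next G v T' (explored G v T' i)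
        rw [next, next, hfr]
  calc T = (range #T).image (visit G v T) := (image_visit_range_card G v T hT).symm
    _ = (range #T').image (visit G v T') := by rw [hcard]; exact image_congr fun j _ => hvisit j
    _ = T' := image_visit_range_card G v T' hT'

end Code

theorem ncard_isCluster_le_choose [Fintype V] {z : ℕ} (hdeg : ∀ u, G.degree u ≤ z) (s : ℕ) :
    {T : Finset V | IsCluster G v T ∧ #T = s}.ncard ≤ ((s - 1) * z).choose (s - 1) := by
  obtain ⟨ℓ, hℓ, hℓz⟩ := exists_neighbor_labelling G hdeg
  calc _ ≤ (((range (s - 1) ×ˢ range z).powersetCard (s - 1) : Finset (Finset (ℕ × ℕ))) :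
        Set (Finset (ℕ × ℕ))).ncard := by
        refine Set.ncard_le_ncard_of_injOn (code G v · ℓ) ?_ ?_
        · rintro T ⟨hT, rfl⟩
          exact mem_powersetCard.2 ⟨code_subset G v T hℓz hT, card_code G v T hℓ hT⟩
        · exact fun T hT T' hT' h => eq_of_code_eq G v T hℓ hT.1 hT'.1 h
    _ = _ := by rw [Set.ncard_coe_finset, card_powersetCard, card_product, card_range, card_range]

end Exploration

end ClusterCount

open Nat in
theorem Nat.choose_mul_le_mul_exp_pow (z k : ℕ) :
    ((k * z).choose k : ℝ) ≤ (z * Real.exp 1) ^ k :=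
  calc ((k * z).choose k : ℝ) ≤ ((k * z : ℕ) : ℝ) ^ k / k ! := choose_le_pow_div k (k * z)
    _ = (z : ℝ) ^ k * ((k : ℝ) ^ k / k !) := by push_cast; ring
    _ ≤ (z : ℝ) ^ k * Real.exp k := by
      gcongr
      exact Real.pow_div_factorial_le_exp _ (Nat.cast_nonneg k) k
    _ = (z * Real.exp 1) ^ k := by rw [mul_pow, ← Real.exp_nat_mul, mul_one]

theorem connected_cluster_count_general {V : Type*} [Fintype V]
    (G : SimpleGraph V) [DecidableRel G.Adj] (z : ℕ)
    (hdeg : ∀ u, G.degree u ≤ z) (v : V) (s : ℕ) :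
    ({T : Finset V | v ∈ T ∧ T.card = s ∧
        ∀ x ∈ T, ∃ w : G.Walk x v, ∀ u ∈ w.support, u ∈ T}.ncard : ℝ)
      ≤ ((z : ℝ) * Real.exp 1) ^ (s - 1) := by
  let _ : LinearOrder V := LinearOrder.lift' _ (Fintype.equivFin V).injective
  have hset : {T : Finset V | v ∈ T ∧ T.card = s ∧
      ∀ x ∈ T, ∃ w : G.Walk x v, ∀ u ∈ w.support, u ∈ T} =
      {T | ClusterCount.IsCluster G v T ∧ T.card = s} :=
    Set.ext fun _ =>
      ⟨fun ⟨hv, hs, hc⟩ => ⟨⟨hv, hc⟩, hs⟩, fun ⟨⟨hv, hc⟩, hs⟩ => ⟨hv, hs, hc⟩⟩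
  rw [hset]
  calc _ ≤ (((s - 1) * z).choose (s - 1) : ℝ) := by
        exact_mod_cast ClusterCount.ncard_isCluster_le_choose G v hdeg s
    _ ≤ _ := Nat.choose_mul_le_mul_exp_pow z (s - 1)

/-- In a graph of maximum degree `z`, the number of connected vertex sets of
size `s` containing a fixed vertex `v` is at most `(z e)^(s-1)`. -/
theorem connected_cluster_count {V : Type*} [Fintype V] [DecidableEq V]
    (G : SimpleGraph V) [DecidableRel G.Adj] (z : ℕ) (hz : 1 ≤ z)
    (hdeg : ∀ u, G.degree u ≤ z) (v : V) (s : ℕ) (hs : 1 ≤ s) :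
    ({T : Finset V | v ∈ T ∧ T.card = s ∧
        ∀ x ∈ T, ∃ w : G.Walk x v, ∀ u ∈ w.support, u ∈ T}.ncard : ℝ)
      ≤ ((z : ℝ) * Real.exp 1) ^ (s - 1) :=
  connected_cluster_count_general G z hdeg v s
end

section
/- Let G be a graph on n vertices with maximum degree z. Under a local stochastic noise model with error rate p (i.e., for every set A of vertices, the probability that all vertices of A have errors is at most p^{|A|}), the probability that there exists a connected cluster of size s ≥ d in which at least ⌈s/2⌉ vertices have errors is at most (n/(z·e)) · (2·z·e·√p)^d / (1 − 2·z·e·√p), provided 2·z·e·√p < 1. -/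
/-!
Union bound: the event is covered by the events `S ⊆ E` for a cluster `T` of size `s ≥ d` and a
set `S ⊆ T` of `⌈s/2⌉` vertices, each of probability at most `p ^ ⌈s/2⌉`. The clusters of size
`s` through a fixed vertex are counted with the generating function `∑ x ^ #T`: removing the
vertex splits a cluster into branches, clusters through its neighbours, so the generating
function is at most any `t ≥ 0` with `x (1 + t) ^ z ≤ t`, as for the `z`-ary tree. Optimising
over `t` bounds their number by `(z e (1 + 1/(s-1))) ^ (s-1)`, and
`(1 + 1/(s-1)) ^ (s-1) C(s, ⌈s/2⌉) p ^ ⌈s/2⌉ ≤ (2 √p) ^ s` (for odd `s` thanks to the spare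
factor `√p < 1/(2e)`), so each vertex contributes at most `(2 z e √p) ^ s / (z e)` in size `s`;
the geometric series over `s ≥ d` gives the bound.
-/

open MeasureTheory Finset Real

namespace SimpleGraph

variable {V : Type*} (G : SimpleGraph V)

def ReachableIn (A : Finset V) (a b : V) : Prop :=
  ∃ w : G.Walk a b, ∀ u ∈ w.support, u ∈ A

def IsCluster (T : Finset V) : Prop :=
  ∀ x ∈ T, ∀ y ∈ T, G.ReachableIn T x y

open Classical in
noncomputable def clustersAt (U : Finset V) (v : V) : Finset (Finset V) :=
  U.powerset.filter fun T => v ∈ T ∧ G.IsCluster T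

variable {G}

lemma mem_clustersAt {U T : Finset V} {v : V} :
    T ∈ G.clustersAt U v ↔ T ⊆ U ∧ v ∈ T ∧ G.IsCluster T := by
  simp [clustersAt]

lemma card_clustersAt_card_eq_one_le (U : Finset V) (v : V) :
    #{T ∈ G.clustersAt U v | #T = 1} ≤ 1 := by
  have h : ∀ T ∈ {T ∈ G.clustersAt U v | #T = 1}, T = {v} := by
    intro T hT
    obtain ⟨hT, h1⟩ := mem_filter.1 hT
    obtain ⟨a, rfl⟩ := card_eq_one.1 h1
    rw [mem_singleton.1 (mem_clustersAt.1 hT).2.1]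
  exact card_le_one.2 fun T hT T' hT' => (h T hT).trans (h T' hT').symm

namespace ReachableIn

variable {A : Finset V} {a b c : V}

lemma refl (ha : a ∈ A) : G.ReachableIn A a a :=
  ⟨.nil, by simpa using ha⟩

lemma of_adj (h : G.Adj a b) (ha : a ∈ A) (hb : b ∈ A) : G.ReachableIn A a b :=
  ⟨h.toWalk, by simp [ha, hb]⟩

lemma symm (h : G.ReachableIn A a b) : G.ReachableIn A b a :=
  let ⟨w, hw⟩ := h
  ⟨w.reverse, by simpa using hw⟩

lemma trans (h : G.ReachableIn A a b) (h' : G.ReachableIn A b c) : G.ReachableIn A a c := by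
  obtain ⟨w, hw⟩ := h
  obtain ⟨w', hw'⟩ := h'
  refine ⟨w.append w', fun u hu => ?_⟩
  rcases Walk.mem_support_append_iff w w' |>.1 hu with hu | hu
  exacts [hw u hu, hw' u hu]

lemma left_mem (h : G.ReachableIn A a b) : a ∈ A :=
  let ⟨w, hw⟩ := h
  hw a w.start_mem_support

lemma right_mem (h : G.ReachableIn A a b) : b ∈ A :=
  h.symm.left_mem

lemma of_mem_support {w : G.Walk a b} (hw : ∀ u ∈ w.support, u ∈ A) {c : V}
    (hc : c ∈ w.support) : G.ReachableIn A a c := by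
  classical
  exact ⟨w.takeUntil c hc, fun u hu => hw u (w.support_takeUntil_subset_support hc hu)⟩

end ReachableIn

lemma Walk.exists_adj_reachableIn_erase [DecidableEq V] {T : Finset V} {a v : V}
    (w : G.Walk a v) (hw : ∀ u ∈ w.support, u ∈ T) (ha : a ≠ v) :
    ∃ b, G.Adj v b ∧ G.ReachableIn (T.erase v) a b := by
  induction w with
  | nil => exact absurd rfl ha
  | @cons a c v hac w ih =>
    have haT : a ∈ T.erase v := mem_erase.2 ⟨ha, hw a (by simp)⟩
    by_cases hcv : c = v
    · subst hcv
      exact ⟨a, hac.symm, .refl haT⟩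
    · obtain ⟨b, hvb, hcb⟩ := ih (fun u hu => hw u (by simp [hu])) hcv
      exact ⟨b, hvb, (ReachableIn.of_adj hac haT hcb.left_mem).trans hcb⟩

section Component

variable (G) in
open Classical in
noncomputable def componentIn (A : Finset V) (a : V) : Finset V :=
  A.filter (G.ReachableIn A a)

variable {A : Finset V} {a b : V}

lemma mem_componentIn : b ∈ G.componentIn A a ↔ G.ReachableIn A a b := by
  simp only [componentIn, mem_filter, and_iff_right_iff_imp]
  exact ReachableIn.right_mem

lemma componentIn_subset : G.componentIn A a ⊆ A :=
  fun _ hb => (mem_componentIn.1 hb).right_mem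

lemma mem_componentIn_self (ha : a ∈ A) : a ∈ G.componentIn A a :=
  mem_componentIn.2 (.refl ha)

lemma componentIn_eq_of_mem (h : b ∈ G.componentIn A a) :
    G.componentIn A b = G.componentIn A a := by
  have hab := mem_componentIn.1 h
  ext c
  simp only [mem_componentIn]
  exact ⟨hab.trans, hab.symm.trans⟩

lemma isCluster_componentIn : G.IsCluster (G.componentIn A a) := by
  intro x hx y hy
  obtain ⟨wx, hwx⟩ := mem_componentIn.1 hx
  obtain ⟨wy, hwy⟩ := mem_componentIn.1 hy
  refine ⟨wx.reverse.append wy, fun u hu => mem_componentIn.2 ?_⟩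
  rcases Walk.mem_support_append_iff _ _ |>.1 hu with hu | hu
  · exact .of_mem_support hwx (by simpa using hu)
  · exact .of_mem_support hwy hu

end Component

section Branch

variable [LinearOrder V]

variable (G) in
open Classical in
/-- Each component of `T.erase v` is recorded once, at its least neighbour of `v`. -/
noncomputable def branch (T : Finset V) (v u : V) : Finset V :=
  if G.Adj v u ∧ ∀ b ∈ G.componentIn (T.erase v) u, G.Adj v b → u ≤ b then
    G.componentIn (T.erase v) u
  else ∅

variable {T U : Finset V} {v u u' : V}

lemma branch_subset_componentIn : G.branch T v u ⊆ G.componentIn (T.erase v) u := by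
  unfold branch
  split_ifs <;> simp

lemma disjoint_branch (h : u ≠ u') : Disjoint (G.branch T v u) (G.branch T v u') := by
  unfold branch
  split_ifs with hu hu'
  · refine Finset.disjoint_left.2 fun c hc hc' => h (le_antisymm ?_ ?_)
    · refine hu.2 u' ?_ hu'.1
      rw [← componentIn_eq_of_mem hc, componentIn_eq_of_mem hc']
      exact mem_componentIn_self (mem_componentIn.1 hc').left_mem
    · refine hu'.2 u ?_ hu.1
      rw [← componentIn_eq_of_mem hc', componentIn_eq_of_mem hc]
      exact mem_componentIn_self (mem_componentIn.1 hc).left_mem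
  all_goals simp

lemma biUnion_branch [Fintype V] (hT : G.IsCluster T) (hv : v ∈ T) :
    univ.biUnion (G.branch T v) = T.erase v := by
  classical
  refine Subset.antisymm (biUnion_subset.2 fun u _ =>
    branch_subset_componentIn.trans componentIn_subset) fun a ha => ?_
  obtain ⟨hav, haT⟩ := mem_erase.1 ha
  obtain ⟨w, hw⟩ := hT a haT v hv
  obtain ⟨b, hvb, hab⟩ := w.exists_adj_reachableIn_erase hw hav
  set F := (G.componentIn (T.erase v) a).filter (G.Adj v)
  have hF : F.Nonempty := ⟨b, mem_filter.2 ⟨mem_componentIn.2 hab, hvb⟩⟩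
  obtain ⟨hm, hvm⟩ := mem_filter.1 (F.min'_mem hF)
  have hcomp := componentIn_eq_of_mem hm
  refine mem_biUnion.2 ⟨F.min' hF, mem_univ _, ?_⟩
  rw [branch, if_pos ⟨hvm, fun c hc hvc => F.min'_le c (mem_filter.2 ⟨hcomp ▸ hc, hvc⟩)⟩,
    hcomp]
  exact mem_componentIn_self ha

lemma card_erase_eq_sum_card_branch [Fintype V] (hT : G.IsCluster T) (hv : v ∈ T) :
    #(T.erase v) = ∑ u, #(G.branch T v u) := by
  rw [← biUnion_branch hT hv, card_biUnion fun u _ u' _ h => disjoint_branch h]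

lemma injOn_branch [Fintype V] : Set.InjOn (fun T => G.branch T v) (G.clustersAt U v) := by
  intro T hT T' hT' h
  obtain ⟨-, hv, hT⟩ := mem_clustersAt.1 hT
  obtain ⟨-, hv', hT'⟩ := mem_clustersAt.1 hT'
  rw [← insert_erase hv, ← insert_erase hv', ← biUnion_branch hT hv, ← biUnion_branch hT' hv']
  exact congrArg (fun b => insert v (univ.biUnion b)) h

lemma pow_card_eq_mul_prod_pow_card_branch [Fintype V] (x : ℝ) (hT : G.IsCluster T)
    (hv : v ∈ T) : x ^ #T = x * ∏ u, x ^ #(G.branch T v u) := by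
  rw [prod_pow_eq_pow_sum, ← card_erase_eq_sum_card_branch hT hv, card_erase_of_mem hv,
    ← pow_succ', Nat.sub_add_cancel (card_pos.2 ⟨v, hv⟩)]

lemma branch_eq_empty_or_mem_clustersAt (hTU : T ⊆ U) :
    G.branch T v u = ∅ ∨ G.Adj v u ∧ G.branch T v u ∈ G.clustersAt (U.erase v) u := by
  unfold branch
  split_ifs with h
  · by_cases hu : u ∈ T.erase v
    · exact .inr ⟨h.1, mem_clustersAt.2 ⟨componentIn_subset.trans (erase_subset_erase v hTU),
        mem_componentIn_self hu, isCluster_componentIn⟩⟩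
    · exact .inl (eq_empty_of_forall_notMem fun b hb => hu (mem_componentIn.1 hb).left_mem)
  · exact .inl rfl

end Branch

variable (G) in
noncomputable def clusterGenFun (x : ℝ) (U : Finset V) (v : V) : ℝ :=
  ∑ T ∈ G.clustersAt U v, x ^ #T

lemma clusterGenFun_nonneg {x : ℝ} (hx : 0 ≤ x) (U : Finset V) (v : V) :
    0 ≤ G.clusterGenFun x U v :=
  sum_nonneg fun _ _ => pow_nonneg hx _

section GenFun

variable [Fintype V] [DecidableRel G.Adj] {z : ℕ}

/-- A cluster through `v` is `v` together with its branches, each a cluster through a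
neighbour of `v` avoiding `v`. -/
lemma clusterGenFun_le_mul_prod [LinearOrder V] {x : ℝ} (hx : 0 ≤ x) (U : Finset V) (v : V) :
    G.clusterGenFun x U v ≤
      x * ∏ u ∈ G.neighborFinset v, (1 + G.clusterGenFun x (U.erase v) u) := by
  classical
  set opts : V → Finset (Finset V) := fun u =>
    if G.Adj v u then insert ∅ (G.clustersAt (U.erase v) u) else {∅}
  have hopts (u : V) : ∑ C ∈ opts u, x ^ #C =
      if G.Adj v u then 1 + G.clusterGenFun x (U.erase v) u else 1 := by
    by_cases h : G.Adj v u
    · have : ∅ ∉ G.clustersAt (U.erase v) u := fun h0 => by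
        simpa using (mem_clustersAt.1 h0).2.1
      simp [opts, h, sum_insert this, clusterGenFun]
    · simp [opts, h]
  have hmaps : ∀ T ∈ G.clustersAt U v, G.branch T v ∈ Fintype.piFinset opts := by
    intro T hT
    refine Fintype.mem_piFinset.2 fun u => ?_
    rcases branch_eq_empty_or_mem_clustersAt (mem_clustersAt.1 hT).1 with h | ⟨hadj, h⟩
    · rw [h]
      simp only [opts]
      split_ifs <;> simp
    · simp [opts, hadj, h]
  calc G.clusterGenFun x U v = x * ∑ T ∈ G.clustersAt U v, ∏ u, x ^ #(G.branch T v u) := by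
        rw [clusterGenFun, mul_sum]
        exact sum_congr rfl fun T hT => pow_card_eq_mul_prod_pow_card_branch x
          (mem_clustersAt.1 hT).2.2 (mem_clustersAt.1 hT).2.1
    _ = x * ∑ p ∈ (G.clustersAt U v).image (fun T => G.branch T v), ∏ u, x ^ #(p u) := by
        rw [sum_image injOn_branch]
    _ ≤ x * ∑ p ∈ Fintype.piFinset opts, ∏ u, x ^ #(p u) := by
        gcongr
        exact image_subset_iff.2 hmaps
    _ = x * ∏ u, (if G.Adj v u then 1 + G.clusterGenFun x (U.erase v) u else 1) := by
        simp_rw [← hopts, prod_univ_sum]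
    _ = x * ∏ u ∈ G.neighborFinset v, (1 + G.clusterGenFun x (U.erase v) u) := by
        rw [← prod_filter, neighborFinset_eq_filter]

/-- The branching recursion is dominated by that of the `z`-ary tree, whose generating
function `t` satisfies `t = x (1 + t) ^ z`. -/
lemma clusterGenFun_le (hdeg : ∀ v, G.degree v ≤ z) {x t : ℝ} (hx : 0 ≤ x) (ht : 0 ≤ t)
    (hxt : x * (1 + t) ^ z ≤ t) (U : Finset V) (v : V) : G.clusterGenFun x U v ≤ t := by
  let : LinearOrder V := LinearOrder.lift' _ (Fintype.equivFin V).injective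
  induction U using Finset.strongInduction generalizing v with
  | H U ih =>
  by_cases hv : v ∈ U
  · calc G.clusterGenFun x U v
        ≤ x * ∏ u ∈ G.neighborFinset v, (1 + G.clusterGenFun x (U.erase v) u) :=
          clusterGenFun_le_mul_prod hx U v
      _ ≤ x * (1 + t) ^ G.degree v := by
          rw [← card_neighborFinset_eq_degree, ← prod_const]
          refine mul_le_mul_of_nonneg_left (prod_le_prod (fun u _ => ?_) fun u _ => ?_) hx
          · exact add_nonneg zero_le_one (clusterGenFun_nonneg hx _ u)
          · exact add_le_add_right (ih _ (erase_ssubset hv) u) 1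
      _ ≤ x * (1 + t) ^ z := by gcongr; exacts [by linarith, hdeg v]
      _ ≤ t := hxt
  · have : G.clustersAt U v = ∅ := eq_empty_of_forall_notMem fun T hT =>
      hv ((mem_clustersAt.1 hT).1 (mem_clustersAt.1 hT).2.1)
    simpa [clusterGenFun, this] using ht

lemma card_clustersAt_card_eq_mul_pow_le (hdeg : ∀ v, G.degree v ≤ z) {x t : ℝ} (hx : 0 ≤ x)
    (ht : 0 ≤ t) (hxt : x * (1 + t) ^ z ≤ t) (v : V) (s : ℕ) :
    #{T ∈ G.clustersAt univ v | #T = s} * x ^ s ≤ t := by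
  calc #{T ∈ G.clustersAt univ v | #T = s} * x ^ s
      = ∑ T ∈ G.clustersAt univ v with #T = s, x ^ #T := by
        rw [sum_congr rfl fun T hT => by rw [(mem_filter.1 hT).2], sum_const, nsmul_eq_mul]
    _ ≤ G.clusterGenFun x univ v :=
        sum_le_sum_of_subset_of_nonneg (filter_subset _ _) fun _ _ _ => pow_nonneg hx _
    _ ≤ t := clusterGenFun_le hdeg hx ht hxt univ v

end GenFun

end SimpleGraph

/-- Evaluate at `t = n / (z (n + 1))`, `x = t / (1 + t) ^ z`, and use `1 + t ≤ exp t`. -/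
lemma le_pow_of_forall_mul_pow_le {f : ℝ} {z n : ℕ} (hz : 0 < z) (hn : 0 < n)
    (h : ∀ x t : ℝ, 0 ≤ x → 0 ≤ t → x * (1 + t) ^ z ≤ t → f * x ^ (n + 1) ≤ t) :
    f ≤ (z * exp 1 * (1 + (n : ℝ)⁻¹)) ^ n := by
  set t : ℝ := n / (z * (n + 1))
  have ht : 0 < t := by positivity
  set x : ℝ := t / (1 + t) ^ z
  have hx : 0 < x := by positivity
  have hf : f * x ^ (n + 1) ≤ t := h x t hx.le ht.le (by simp only [x]; field_simp; rfl)
  have hzt : (↑(z * (n + 1)) : ℝ) * t = n := by simp only [t]; push_cast; field_simp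
  calc f ≤ t / x ^ (n + 1) := (le_div_iff₀ (by positivity)).2 hf
    _ = (1 + t) ^ (z * (n + 1)) / t ^ n := by
        simp only [x]; rw [div_pow, ← pow_mul]; field_simp; ring
    _ ≤ exp t ^ (z * (n + 1)) / t ^ n := by
        gcongr; linarith [add_one_le_exp t]
    _ = (z * exp 1 * (1 + (n : ℝ)⁻¹)) ^ n := by
        rw [← exp_nat_mul, hzt, ← exp_one_pow, ← div_pow]
        congr 1
        simp only [t]; field_simp

lemma sixteen_mul_centralBinom_le {m : ℕ} (hm : 3 ≤ m) : 16 * m.centralBinom ≤ 5 * 4 ^ m := by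
  induction m, hm using Nat.le_induction with
  | base => decide
  | succ m hm ih =>
    have h := Nat.succ_mul_centralBinom_succ m
    refine Nat.le_of_mul_le_mul_left ?_ m.succ_pos
    calc (m + 1) * (16 * (m + 1).centralBinom) = 2 * (2 * m + 1) * (16 * m.centralBinom) := by
          rw [mul_left_comm, h]; ring
      _ ≤ 2 * (2 * m + 1) * (5 * 4 ^ m) := by gcongr
      _ ≤ (m + 1) * (5 * 4 ^ (m + 1)) := by
          rw [pow_succ]; nlinarith [Nat.one_le_pow m 4 (by norm_num)]

/-- For `m ≥ 2` the bound `(1 + 1/(2m+1)) ^ (2m+1) ≤ e` suffices; below that it does not. -/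
lemma one_add_inv_pow_mul_centralBinom_le (m : ℕ) :
    (1 + ((2 * m + 1 : ℕ) : ℝ)⁻¹) ^ (2 * m + 1) * (m + 1).centralBinom ≤ 4 ^ (m + 1) := by
  rcases Nat.lt_or_ge m 2 with hm | hm
  · interval_cases m <;> norm_num [Nat.centralBinom, Nat.choose]
  · have hcb : 16 * ((m + 1).centralBinom : ℝ) ≤ 5 * 4 ^ (m + 1) := by
      exact_mod_cast sixteen_mul_centralBinom_le (by omega : 3 ≤ m + 1)
    calc (1 + ((2 * m + 1 : ℕ) : ℝ)⁻¹) ^ (2 * m + 1) * (m + 1).centralBinom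
        ≤ exp 1 * (m + 1).centralBinom := by gcongr; exact one_add_inv_pow_le_exp
      _ ≤ 4 ^ (m + 1) := by nlinarith [exp_one_lt_d9, exp_pos 1]

lemma one_add_inv_pow_mul_choose_mul_pow_le {q : ℝ} (hq : 0 ≤ q) (hqe : 2 * exp 1 * q ≤ 1)
    (n : ℕ) :
    (1 + (n : ℝ)⁻¹) ^ n * (n + 1).choose ((n + 1 + 1) / 2) * q ^ (2 * ((n + 1 + 1) / 2)) ≤
      (2 * q) ^ (n + 1) := by
  obtain ⟨k, rfl | rfl⟩ := Nat.even_or_odd' n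
  · -- for odd `s = 2k + 1`, `q ^ (2 ⌈s/2⌉) = q ^ (s + 1)` and the spare `q ≤ 1/(2e)` absorbs `e`
    have hk : (2 * k + 1 + 1) / 2 = k + 1 := by omega
    have hchoose : ((2 * k + 1).choose (k + 1) : ℝ) ≤ 4 ^ k := by
      rw [Nat.choose_symm_of_eq_add (by omega : 2 * k + 1 = (k + 1) + k)]
      exact_mod_cast Nat.choose_middle_le_pow k
    rw [hk]
    calc (1 + ((2 * k : ℕ) : ℝ)⁻¹) ^ (2 * k) * ((2 * k + 1).choose (k + 1) : ℝ)
          * q ^ (2 * (k + 1))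
        = (1 + ((2 * k : ℕ) : ℝ)⁻¹) ^ (2 * k) * ((2 * k + 1).choose (k + 1) : ℝ)
          * q * q ^ (2 * k + 1) := by ring
      _ ≤ exp 1 * 4 ^ k * q * q ^ (2 * k + 1) := by
          gcongr
          exact one_add_inv_pow_le_exp
      _ = 4 ^ k * (exp 1 * q) * q ^ (2 * k + 1) := by ring
      _ ≤ 4 ^ k * 2 * q ^ (2 * k + 1) := by gcongr; linarith
      _ = (2 * q) ^ (2 * k + 1) := by
          rw [mul_pow, pow_succ (2 : ℝ), pow_mul, show (2 : ℝ) ^ 2 = 4 by norm_num]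
  · have hk : (2 * k + 1 + 1 + 1) / 2 = k + 1 := by omega
    rw [hk, show 2 * k + 1 + 1 = 2 * (k + 1) by ring, ← Nat.centralBinom_eq_two_mul_choose,
      mul_pow, pow_mul (2 : ℝ), pow_mul q, show (2 : ℝ) ^ 2 = 4 by norm_num]
    gcongr
    exact_mod_cast one_add_inv_pow_mul_centralBinom_le k

namespace SimpleGraph

variable {V : Type*} {G : SimpleGraph V} [Fintype V] [DecidableRel G.Adj] {z : ℕ}

lemma card_clustersAt_card_eq_succ_le (hz : 0 < z) (hdeg : ∀ v, G.degree v ≤ z) (v : V)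
    (n : ℕ) : #{T ∈ G.clustersAt univ v | #T = n + 1} ≤ (z * exp 1 * (1 + (n : ℝ)⁻¹)) ^ n := by
  rcases n.eq_zero_or_pos with rfl | hn
  · simpa using G.card_clustersAt_card_eq_one_le univ v
  · exact le_pow_of_forall_mul_pow_le hz hn fun x t hx ht hxt =>
      card_clustersAt_card_eq_mul_pow_le hdeg hx ht hxt v (n + 1)

lemma card_clustersAt_mul_choose_mul_pow_le (hz : 0 < z) (hdeg : ∀ v, G.degree v ≤ z) {q : ℝ}
    (hq : 0 ≤ q) (hr : 2 * z * exp 1 * q < 1) (v : V) (s : ℕ) :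
    #{T ∈ G.clustersAt univ v | #T = s} * s.choose ((s + 1) / 2) * (q ^ 2) ^ ((s + 1) / 2) ≤
      (2 * z * exp 1 * q) ^ s / (z * exp 1) := by
  have hze : 0 < z * exp 1 := by positivity
  rcases s with _ | n
  · have : {T ∈ G.clustersAt univ v | #T = 0} = ∅ := filter_eq_empty_iff.2 fun T hT h0 => by
      simpa [card_eq_zero.1 h0] using (mem_clustersAt.1 hT).2.1
    simp only [this, card_empty, CharP.cast_eq_zero, zero_mul]
    positivity
  · have hqe : 2 * exp 1 * q ≤ 1 := by
      have : (1 : ℝ) ≤ z := by exact_mod_cast hz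
      nlinarith [exp_pos 1]
    calc #{T ∈ G.clustersAt univ v | #T = n + 1} * ((n + 1).choose ((n + 1 + 1) / 2) : ℝ)
          * (q ^ 2) ^ ((n + 1 + 1) / 2)
        ≤ (z * exp 1 * (1 + (n : ℝ)⁻¹)) ^ n * (n + 1).choose ((n + 1 + 1) / 2)
          * (q ^ 2) ^ ((n + 1 + 1) / 2) := by
          gcongr
          exact card_clustersAt_card_eq_succ_le hz hdeg v n
      _ = (z * exp 1) ^ n * ((1 + (n : ℝ)⁻¹) ^ n * (n + 1).choose ((n + 1 + 1) / 2)
          * q ^ (2 * ((n + 1 + 1) / 2))) := by rw [pow_mul, mul_pow (↑z * exp 1)]; ring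
      _ ≤ (z * exp 1) ^ n * (2 * q) ^ (n + 1) := by
          gcongr
          exact one_add_inv_pow_mul_choose_mul_pow_le hq hqe n
      _ = (2 * z * exp 1 * q) ^ (n + 1) / (z * exp 1) := by
          field_simp
          ring

lemma sum_clustersAt_choose_mul_pow_le (hz : 0 < z) (hdeg : ∀ v, G.degree v ≤ z) {p : ℝ}
    (hp : 0 ≤ p) (hr : 2 * z * exp 1 * √p < 1) (d : ℕ) (v : V) :
    ∑ T ∈ G.clustersAt univ v with d ≤ #T, ((#T).choose ((#T + 1) / 2) : ℝ) * p ^ ((#T + 1) / 2)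
      ≤ (2 * z * exp 1 * √p) ^ d / (1 - 2 * z * exp 1 * √p) / (z * exp 1) := by
  set r := 2 * z * exp 1 * √p
  have hmaps : ∀ T ∈ {T ∈ G.clustersAt univ v | d ≤ #T}, #T ∈ Ico d (Fintype.card V + 1) :=
    fun T hT => mem_Ico.2 ⟨(mem_filter.1 hT).2, Nat.lt_succ_of_le (card_le_univ T)⟩
  rw [← sum_fiberwise_of_maps_to hmaps]
  calc _ ≤ ∑ s ∈ Ico d (Fintype.card V + 1), r ^ s / (z * exp 1) := by
        refine sum_le_sum fun s _ => ?_
        calc _ ≤ ∑ T ∈ G.clustersAt univ v with #T = s,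
              ((#T).choose ((#T + 1) / 2) : ℝ) * p ^ ((#T + 1) / 2) :=
              sum_le_sum_of_subset_of_nonneg (filter_subset_filter _ (filter_subset _ _))
                fun _ _ _ => by positivity
          _ = #{T ∈ G.clustersAt univ v | #T = s} * s.choose ((s + 1) / 2)
              * (√p ^ 2) ^ ((s + 1) / 2) := by
              rw [sq_sqrt hp, sum_congr rfl fun T hT => by rw [(mem_filter.1 hT).2], sum_const,
                nsmul_eq_mul, mul_assoc]
          _ ≤ r ^ s / (z * exp 1) :=
              card_clustersAt_mul_choose_mul_pow_le hz hdeg (sqrt_nonneg p) hr v s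
    _ = (∑ s ∈ Ico d (Fintype.card V + 1), r ^ s) / (z * exp 1) := (sum_div ..).symm
    _ ≤ r ^ d / (1 - r) / (z * exp 1) := by
        gcongr
        exact geom_sum_Ico_le_of_lt_one (by positivity) hr

end SimpleGraph

lemma measure_exists_card_filter_mem_ge_le {Ω ι : Type*} [MeasurableSpace Ω] [DecidableEq ι]
    (μ : Measure Ω) (E : Ω → Finset ι) {p : ℝ} (hp : 0 ≤ p)
    (hls : ∀ A : Finset ι, μ {ω | A ⊆ E ω} ≤ ENNReal.ofReal (p ^ #A))
    (𝒯 : Finset (Finset ι)) (k : Finset ι → ℕ) :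
    μ {ω | ∃ T ∈ 𝒯, k T ≤ #{i ∈ T | i ∈ E ω}} ≤
      ENNReal.ofReal (∑ T ∈ 𝒯, ((#T).choose (k T) : ℝ) * p ^ k T) := by
  have hsub : {ω | ∃ T ∈ 𝒯, k T ≤ #{i ∈ T | i ∈ E ω}} ⊆
      ⋃ T ∈ 𝒯, ⋃ S ∈ T.powersetCard (k T), {ω | S ⊆ E ω} := by
    rintro ω ⟨T, hT, hk⟩
    obtain ⟨S, hS, hcard⟩ := exists_subset_card_eq hk
    simp only [Set.mem_iUnion]
    exact ⟨T, hT, S, mem_powersetCard.2 ⟨hS.trans (filter_subset _ _), hcard⟩,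
      fun i hi => (mem_filter.1 (hS hi)).2⟩
  calc μ {ω | ∃ T ∈ 𝒯, k T ≤ #{i ∈ T | i ∈ E ω}}
      ≤ ∑ T ∈ 𝒯, ∑ S ∈ T.powersetCard (k T), μ {ω | S ⊆ E ω} :=
        (measure_mono hsub).trans <| (measure_biUnion_finset_le _ _).trans <|
          sum_le_sum fun T _ => measure_biUnion_finset_le _ _
    _ ≤ ∑ T ∈ 𝒯, ∑ S ∈ T.powersetCard (k T), ENNReal.ofReal (p ^ #S) := by gcongr; exact hls _
    _ = ∑ T ∈ 𝒯, ENNReal.ofReal (((#T).choose (k T) : ℝ) * p ^ k T) := by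
        refine sum_congr rfl fun T _ => ?_
        rw [sum_congr rfl fun S hS => by rw [(mem_powersetCard.1 hS).2], sum_const,
          card_powersetCard, nsmul_eq_mul, ENNReal.ofReal_mul (by positivity),
          ENNReal.ofReal_natCast]
    _ = ENNReal.ofReal (∑ T ∈ 𝒯, ((#T).choose (k T) : ℝ) * p ^ k T) :=
        (ENNReal.ofReal_sum_of_nonneg fun T _ => by positivity).symm

theorem cluster_error_probability_general {V : Type*} [Fintype V] [DecidableEq V]
    (G : SimpleGraph V) [DecidableRel G.Adj] (z : ℕ) (hz : 1 ≤ z)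
    (hdeg : ∀ v, G.degree v ≤ z)
    {Ω : Type*} [MeasurableSpace Ω] (μ : Measure Ω)
    (E : Ω → Finset V) (p : ℝ) (hp0 : 0 < p)
    (hls : ∀ A : Finset V, μ {ω | A ⊆ E ω} ≤ ENNReal.ofReal (p ^ A.card))
    (d : ℕ)
    (hthr : 2 * (z : ℝ) * Real.exp 1 * Real.sqrt p < 1) :
    μ {ω | ∃ T : Finset V, T.Nonempty ∧
        (∀ x ∈ T, ∀ y ∈ T, ∃ w : G.Walk x y, ∀ u ∈ w.support, u ∈ T) ∧
        d ≤ T.card ∧ (T.card + 1) / 2 ≤ (T.filter (fun v => v ∈ E ω)).card}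
      ≤ ENNReal.ofReal ((Fintype.card V : ℝ) / ((z : ℝ) * Real.exp 1) *
          (2 * (z : ℝ) * Real.exp 1 * Real.sqrt p) ^ d /
          (1 - 2 * (z : ℝ) * Real.exp 1 * Real.sqrt p)) := by
  set r := 2 * (z : ℝ) * exp 1 * √p
  set 𝒯 : V → Finset (Finset V) := fun v => {T ∈ G.clustersAt univ v | d ≤ #T}
  have hsub : {ω | ∃ T : Finset V, T.Nonempty ∧ G.IsCluster T ∧ d ≤ #T ∧
        (#T + 1) / 2 ≤ #{v ∈ T | v ∈ E ω}} ⊆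
      ⋃ v ∈ univ, {ω | ∃ T ∈ 𝒯 v, (#T + 1) / 2 ≤ #{u ∈ T | u ∈ E ω}} := by
    rintro ω ⟨T, ⟨v, hv⟩, hT, hd, hk⟩
    exact Set.mem_biUnion (mem_univ v)
      ⟨T, mem_filter.2 ⟨G.mem_clustersAt.2 ⟨subset_univ T, hv, hT⟩, hd⟩, hk⟩
  calc _ ≤ ∑ v, μ {ω | ∃ T ∈ 𝒯 v, (#T + 1) / 2 ≤ #{u ∈ T | u ∈ E ω}} :=
        (measure_mono hsub).trans (measure_biUnion_finset_le _ _)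
    _ ≤ ∑ _v : V, ENNReal.ofReal (r ^ d / (1 - r) / (z * exp 1)) := by
        refine sum_le_sum fun v _ => (measure_exists_card_filter_mem_ge_le μ E hp0.le hls _ _).trans
          (ENNReal.ofReal_le_ofReal ?_)
        exact G.sum_clustersAt_choose_mul_pow_le hz hdeg hp0.le hthr d v
    _ = _ := by
        rw [sum_const, card_univ, nsmul_eq_mul, ← ENNReal.ofReal_natCast,
          ← ENNReal.ofReal_mul (Nat.cast_nonneg _)]
        congr 1
        ring

/-- Under local stochastic noise with rate `p` on a graph of maximum degree `z`
on `n` vertices, the probability that some connected cluster of size `s ≥ d`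
has at least `⌈s/2⌉` erroneous vertices is at most
`(n/(z e)) (2 z e √p)^d / (1 - 2 z e √p)`, provided `2 z e √p < 1`. -/
theorem cluster_error_probability {V : Type*} [Fintype V] [DecidableEq V]
    (G : SimpleGraph V) [DecidableRel G.Adj] (z : ℕ) (hz : 1 ≤ z)
    (hdeg : ∀ v, G.degree v ≤ z)
    {Ω : Type*} [MeasurableSpace Ω] (μ : Measure Ω) [IsProbabilityMeasure μ]
    (E : Ω → Finset V) (p : ℝ) (hp0 : 0 < p) (hp1 : p < 1)
    (hls : ∀ A : Finset V, μ {ω | A ⊆ E ω} ≤ ENNReal.ofReal (p ^ A.card))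
    (d : ℕ) (hd : 1 ≤ d)
    (hthr : 2 * (z : ℝ) * Real.exp 1 * Real.sqrt p < 1) :
    μ {ω | ∃ T : Finset V, T.Nonempty ∧
        (∀ x ∈ T, ∀ y ∈ T, ∃ w : G.Walk x y, ∀ u ∈ w.support, u ∈ T) ∧
        d ≤ T.card ∧ (T.card + 1) / 2 ≤ (T.filter (fun v => v ∈ E ω)).card}
      ≤ ENNReal.ofReal ((Fintype.card V : ℝ) / ((z : ℝ) * Real.exp 1) *
          (2 * (z : ℝ) * Real.exp 1 * Real.sqrt p) ^ d /
          (1 - 2 * (z : ℝ) * Real.exp 1 * Real.sqrt p)) :=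
  cluster_error_probability_general G z hz hdeg μ E p hp0 hls d hthr
end

section
/- For a fixed vertex v in a graph on n vertices with maximum degree z, and a local stochastic error model with rate p, the probability that some connected cluster S of size s ≥ d containing v has at least ⌈s/2⌉ erroneous vertices is at most Σ_{s ≥ d} (z·e)^{s−1} · 2^s · p^{s/2}, which converges when 2·z·e·√p < 1. -/
/-!
A cluster of size `s` with at least `⌈s/2⌉` errors contains an erroneous set of exactly
`⌈s/2⌉` of its vertices, so by the union bound and local stochasticity it fails with
probability at most `C(s, ⌈s/2⌉) p^⌈s/2⌉ ≤ 2^s √p^s`.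

Clusters of size `r + 1` through `v` number at most `C((r + 1) z, r) ≤ (z e)^r`. To see this,
grow a cluster from a set `A` while forbidding a set `F`: a fixed vertex `u` adjacent to `A`,
outside `A ∪ F`, is either added (one vertex fewer to add, at most `z` new boundary vertices) or
forbidden (one boundary vertex fewer). By Pascal's rule the clusters extending `A` by `r`
vertices number at most `C(|∂A \ F| + z r, r)`.

Summing over the sizes gives a series dominated by a geometric one of ratio `2 z e √p`.
-/

open Finset MeasureTheory

theorem add_one_pow_le_exp_one_pow_mul_factorial (n : ℕ) :
    ((n : ℝ) + 1) ^ n ≤ Real.exp 1 ^ n * n.factorial := by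
  induction n with
  | zero => simp
  | succ n ih =>
    have hstep : ((n : ℝ) + 1 + 1) ^ (n + 1) ≤ Real.exp 1 * ((n : ℝ) + 1) ^ (n + 1) := by
      calc ((n : ℝ) + 1 + 1) ^ (n + 1)
          = (1 + ((n + 1 : ℕ) : ℝ)⁻¹) ^ (n + 1) * ((n : ℝ) + 1) ^ (n + 1) := by
            rw [← mul_pow]; push_cast; field_simp
        _ ≤ Real.exp 1 * ((n : ℝ) + 1) ^ (n + 1) := by
            gcongr; exact Real.one_add_inv_pow_le_exp
    calc (((n + 1 : ℕ) : ℝ) + 1) ^ (n + 1)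
        ≤ Real.exp 1 * ((n : ℝ) + 1) * ((n : ℝ) + 1) ^ n := by
          push_cast; rw [mul_assoc, ← pow_succ']; exact hstep
      _ ≤ Real.exp 1 * ((n : ℝ) + 1) * (Real.exp 1 ^ n * n.factorial) := by gcongr
      _ = Real.exp 1 ^ (n + 1) * (n + 1).factorial := by push_cast [Nat.factorial_succ]; ring

theorem choose_succ_mul_le_mul_exp_one_pow (r z : ℕ) :
    (((r + 1) * z).choose r : ℝ) ≤ (z * Real.exp 1) ^ r := by
  calc (((r + 1) * z).choose r : ℝ) ≤ (((r + 1) * z : ℕ) : ℝ) ^ r / r.factorial :=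
        Nat.choose_le_pow_div r _
    _ = ((r : ℝ) + 1) ^ r * z ^ r / r.factorial := by push_cast; rw [mul_pow]
    _ ≤ Real.exp 1 ^ r * r.factorial * z ^ r / r.factorial := by
        gcongr; exact add_one_pow_le_exp_one_pow_mul_factorial r
    _ = (z * Real.exp 1) ^ r := by field_simp; ring

theorem choose_mul_pow_half_le {p : ℝ} (hp0 : 0 ≤ p) (hp1 : p ≤ 1) (s : ℕ) :
    (s.choose ((s + 1) / 2) : ℝ) * p ^ ((s + 1) / 2) ≤ 2 ^ s * Real.sqrt p ^ s := by
  have hsqrt : p ^ ((s + 1) / 2) = Real.sqrt p ^ (2 * ((s + 1) / 2)) := by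
    rw [pow_mul, Real.sq_sqrt hp0]
  rw [hsqrt]
  refine mul_le_mul (mod_cast Nat.choose_le_two_pow s _) ?_ (by positivity) (by positivity)
  exact pow_le_pow_of_le_one (Real.sqrt_nonneg p) (Real.sqrt_le_one.mpr hp1) (by omega)

theorem summable_ite_pow_sub_one_mul {c x : ℝ} (hc : 0 ≤ c) (hx : 0 ≤ x) (h : 2 * c * x < 1)
    (d : ℕ) : Summable fun s : ℕ => if d ≤ s then c ^ (s - 1) * 2 ^ s * x ^ s else 0 := by
  rw [← summable_nat_add_iff 1]
  refine Summable.of_nonneg_of_le (fun s => by positivity) (fun s => ?_)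
    ((summable_geometric_of_lt_one (by positivity) h).mul_left (2 * x))
  split_ifs
  · rw [Nat.add_sub_cancel]; exact le_of_eq (by ring)
  · positivity

namespace SimpleGraph

variable {V : Type*} (G : SimpleGraph V)

def ConnectedOn (T : Finset V) : Prop :=
  ∀ x ∈ T, ∀ y ∈ T, ∃ w : G.Walk x y, ∀ u ∈ w.support, u ∈ T

section Boundary

variable [Fintype V] [DecidableEq V] [DecidableRel G.Adj]

def outerBoundary (A : Finset V) : Finset V := A.biUnion (fun a => G.neighborFinset a) \ A

variable {G}

theorem mem_outerBoundary {A : Finset V} {x : V} :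
    x ∈ G.outerBoundary A ↔ (∃ a ∈ A, G.Adj a x) ∧ x ∉ A := by
  simp [outerBoundary]

theorem outerBoundary_singleton (v : V) : G.outerBoundary {v} = G.neighborFinset v := by
  ext x
  simp only [mem_outerBoundary, mem_singleton, exists_eq_left, mem_neighborFinset,
    and_iff_left_iff_imp]
  exact fun h => (G.ne_of_adj h).symm

theorem outerBoundary_insert_subset (u : V) (A : Finset V) :
    G.outerBoundary (insert u A) ⊆ (G.outerBoundary A).erase u ∪ G.neighborFinset u := by
  intro x hx
  obtain ⟨⟨a, ha, hax⟩, hx⟩ := mem_outerBoundary.1 hx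
  rw [mem_insert, not_or] at hx
  rcases mem_insert.1 ha with rfl | ha
  · exact mem_union_right _ ((mem_neighborFinset _ _ _).2 hax)
  · exact mem_union_left _
      (mem_erase.2 ⟨hx.1, mem_outerBoundary.2 ⟨⟨a, ha, hax⟩, hx.2⟩⟩)

theorem ConnectedOn.exists_mem_outerBoundary {A T : Finset V} (hT : G.ConnectedOn T)
    (hAT : A ⊆ T) (hA : A.Nonempty) (hTA : ¬T ⊆ A) : ∃ b ∈ T, b ∈ G.outerBoundary A := by
  obtain ⟨a, ha⟩ := hA
  obtain ⟨y, hyT, hyA⟩ := not_subset.1 hTA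
  obtain ⟨w, hw⟩ := hT a (hAT ha) y hyT
  obtain ⟨d, hd, hdA, hdA'⟩ := w.exists_boundary_dart (A : Set V) ha hyA
  exact ⟨d.snd, hw _ (w.dart_snd_mem_support_of_mem_darts hd),
    mem_outerBoundary.2 ⟨⟨d.fst, hdA, d.adj⟩, hdA'⟩⟩

end Boundary

section Extensions

variable [Fintype V]

open Classical in
noncomputable def connectedExtensions (A F : Finset V) (r : ℕ) : Finset (Finset V) :=
  univ.filter fun T => A ⊆ T ∧ Disjoint T F ∧ #T = #A + r ∧ G.ConnectedOn T

variable {G}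

theorem mem_connectedExtensions {A F T : Finset V} {r : ℕ} :
    T ∈ G.connectedExtensions A F r ↔
      A ⊆ T ∧ Disjoint T F ∧ #T = #A + r ∧ G.ConnectedOn T := by
  simp [connectedExtensions]

theorem filter_mem_connectedExtensions_subset [DecidableEq V] {A F : Finset V} {u : V}
    (hu : u ∉ A) (r : ℕ) :
    (G.connectedExtensions A F (r + 1)).filter (u ∈ ·) ⊆
      G.connectedExtensions (insert u A) F r := by
  intro T hT
  obtain ⟨hT, huT⟩ := mem_filter.1 hT
  obtain ⟨hAT, hTF, hcard, hconn⟩ := mem_connectedExtensions.1 hT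
  refine mem_connectedExtensions.2 ⟨insert_subset huT hAT, hTF, ?_, hconn⟩
  rw [card_insert_of_notMem hu, hcard, add_right_comm, add_assoc]

theorem filter_notMem_connectedExtensions_subset [DecidableEq V] (A F : Finset V) (u : V)
    (r : ℕ) :
    (G.connectedExtensions A F r).filter (u ∉ ·) ⊆ G.connectedExtensions A (insert u F) r := by
  intro T hT
  obtain ⟨hT, huT⟩ := mem_filter.1 hT
  obtain ⟨hAT, hTF, hcard, hconn⟩ := mem_connectedExtensions.1 hT
  exact mem_connectedExtensions.2 ⟨hAT, disjoint_insert_right.2 ⟨huT, hTF⟩, hcard, hconn⟩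

end Extensions

section Count

variable [Fintype V] [DecidableEq V] [DecidableRel G.Adj] {G}

theorem card_outerBoundary_insert_sdiff_le {z : ℕ} (hdeg : ∀ u, G.degree u ≤ z)
    {A F : Finset V} {u : V} (hu : u ∈ G.outerBoundary A \ F) :
    #(G.outerBoundary (insert u A) \ F) ≤ #(G.outerBoundary A \ F) - 1 + z := by
  calc #(G.outerBoundary (insert u A) \ F)
      ≤ #((G.outerBoundary A \ F).erase u ∪ G.neighborFinset u) := by
        refine card_le_card fun x hx => ?_
        obtain ⟨hx, hxF⟩ := mem_sdiff.1 hx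
        rcases mem_union.1 (outerBoundary_insert_subset u A hx) with hx | hx
        · obtain ⟨hxu, hx⟩ := mem_erase.1 hx
          exact mem_union_left _ (mem_erase.2 ⟨hxu, mem_sdiff.2 ⟨hx, hxF⟩⟩)
        · exact mem_union_right _ hx
    _ ≤ #((G.outerBoundary A \ F).erase u) + #(G.neighborFinset u) := card_union_le _ _
    _ ≤ #(G.outerBoundary A \ F) - 1 + z := by
        rw [card_erase_of_mem hu, card_neighborFinset_eq_degree]
        exact Nat.add_le_add_left (hdeg u) _

theorem connectedExtensions_eq_empty {A F : Finset V} (hA : A.Nonempty)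
    (hF : G.outerBoundary A \ F = ∅) (r : ℕ) : G.connectedExtensions A F (r + 1) = ∅ := by
  refine eq_empty_of_forall_notMem fun T hT => ?_
  obtain ⟨hAT, hTF, hcard, hconn⟩ := mem_connectedExtensions.1 hT
  obtain ⟨b, hbT, hb⟩ := hconn.exists_mem_outerBoundary hAT hA
    fun h => by have := card_le_card h; omega
  have : b ∈ G.outerBoundary A \ F := mem_sdiff.2 ⟨hb, Finset.disjoint_left.1 hTF hbT⟩
  simp [hF] at this

theorem card_connectedExtensions_le {z : ℕ} (hdeg : ∀ u, G.degree u ≤ z) :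
    ∀ (r : ℕ) {A : Finset V} (F : Finset V), A.Nonempty →
      #(G.connectedExtensions A F r) ≤ (#(G.outerBoundary A \ F) + z * r).choose r
  | 0, A, F, _ => by
    refine (card_le_one.2 fun T hT T' hT' => ?_).trans (Nat.choose_zero_right _).ge
    obtain ⟨hAT, -, hT, -⟩ := mem_connectedExtensions.1 hT
    obtain ⟨hAT', -, hT', -⟩ := mem_connectedExtensions.1 hT'
    rw [← eq_of_subset_of_card_le hAT hT.le, ← eq_of_subset_of_card_le hAT' hT'.le]
  | r + 1, A, F, hA => by
    obtain ⟨u, hu⟩ | hF := (G.outerBoundary A \ F).eq_empty_or_nonempty.symm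
    · have huA : u ∉ A := (mem_outerBoundary.1 (mem_sdiff.1 hu).1).2
      have hboundary_out : G.outerBoundary A \ insert u F = (G.outerBoundary A \ F).erase u := by
        ext x; simp only [mem_sdiff, mem_insert, mem_erase]; tauto
      have ih_in := card_connectedExtensions_le hdeg r F (insert_nonempty u A)
      have ih_out := card_connectedExtensions_le hdeg (r + 1) (insert u F) hA
      rw [hboundary_out, card_erase_of_mem hu] at ih_out
      have hboundary_in := card_outerBoundary_insert_sdiff_le hdeg hu
      have hpos : 0 < #(G.outerBoundary A \ F) := card_pos.2 ⟨u, hu⟩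
      calc #(G.connectedExtensions A F (r + 1))
          = #((G.connectedExtensions A F (r + 1)).filter (u ∈ ·)) +
              #((G.connectedExtensions A F (r + 1)).filter (u ∉ ·)) :=
            (card_filter_add_card_filter_not _).symm
        _ ≤ (#(G.outerBoundary A \ F) - 1 + z * (r + 1)).choose r +
              (#(G.outerBoundary A \ F) - 1 + z * (r + 1)).choose (r + 1) := by
            gcongr
            · exact (card_le_card (filter_mem_connectedExtensions_subset huA r)).trans
                (ih_in.trans (Nat.choose_le_choose _ (by nlinarith)))
            · exact (card_le_card (filter_notMem_connectedExtensions_subset A F u _)).trans ih_out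
        _ = (#(G.outerBoundary A \ F) + z * (r + 1)).choose (r + 1) := by
            rw [← Nat.choose_succ_succ']; congr 1; omega
    · rw [connectedExtensions_eq_empty hA hF]
      exact Nat.zero_le _
termination_by r A F => (r, #(G.outerBoundary A \ F))
decreasing_by
  · exact Prod.Lex.left _ _ (Nat.lt_succ_self r)
  · refine Prod.Lex.right _ ?_
    rw [hboundary_out]
    exact card_erase_lt_of_mem hu

theorem card_connectedExtensions_singleton_le {z : ℕ} (hdeg : ∀ u, G.degree u ≤ z) (v : V)
    (r : ℕ) : (#(G.connectedExtensions {v} ∅ r) : ℝ) ≤ (z * Real.exp 1) ^ r := by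
  have h := card_connectedExtensions_le hdeg r ∅ (singleton_nonempty v)
  rw [sdiff_empty, outerBoundary_singleton, card_neighborFinset_eq_degree] at h
  calc (#(G.connectedExtensions {v} ∅ r) : ℝ) ≤ (((r + 1) * z).choose r : ℕ) := by
        exact_mod_cast h.trans (Nat.choose_le_choose r (by nlinarith [hdeg v]))
    _ ≤ (z * Real.exp 1) ^ r := choose_succ_mul_le_mul_exp_one_pow r z

theorem sum_two_pow_mul_pow_card_le_tsum {z : ℕ} (hdeg : ∀ u, G.degree u ≤ z) {v : V}
    {d : ℕ} {x : ℝ} (hx : 0 ≤ x)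
    (hsum : Summable fun s : ℕ =>
      if d ≤ s then ((z : ℝ) * Real.exp 1) ^ (s - 1) * 2 ^ s * x ^ s else 0)
    {𝒞 : Finset (Finset V)} (h𝒞 : ∀ T ∈ 𝒞, v ∈ T ∧ G.ConnectedOn T ∧ d ≤ #T) :
    ∑ T ∈ 𝒞, (2 : ℝ) ^ #T * x ^ #T ≤
      ∑' s : ℕ, if d ≤ s then ((z : ℝ) * Real.exp 1) ^ (s - 1) * 2 ^ s * x ^ s else 0 := by
  rw [sum_comp (fun s => (2 : ℝ) ^ s * x ^ s) card]
  refine (sum_le_sum fun s hs => ?_).trans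
    (hsum.sum_le_tsum _ fun s _ => by split_ifs <;> positivity)
  obtain ⟨T, hT, rfl⟩ := mem_image.1 hs
  obtain ⟨hvT, -, hdT⟩ := h𝒞 T hT
  have hfiber : #{T' ∈ 𝒞 | #T' = #T} ≤ #(G.connectedExtensions {v} ∅ (#T - 1)) := by
    refine card_le_card fun T' hT' => ?_
    obtain ⟨hT', hcard⟩ := mem_filter.1 hT'
    obtain ⟨hvT', hconn, -⟩ := h𝒞 T' hT'
    have : 0 < #T := card_pos.2 ⟨v, hvT⟩
    exact mem_connectedExtensions.2 ⟨singleton_subset_iff.2 hvT', disjoint_empty_right _,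
      by rw [hcard, card_singleton]; omega, hconn⟩
  rw [if_pos hdT, nsmul_eq_mul, mul_assoc]
  gcongr
  exact (Nat.cast_le.2 hfiber).trans (card_connectedExtensions_singleton_le hdeg v _)

end Count

end SimpleGraph

theorem measure_setOf_le_card_filter_le {V Ω : Type*} [DecidableEq V] [MeasurableSpace Ω]
    {μ : Measure Ω} {E : Ω → Finset V} {p : ℝ}
    (hls : ∀ A : Finset V, μ {ω | A ⊆ E ω} ≤ ENNReal.ofReal (p ^ A.card))
    (T : Finset V) (k : ℕ) :
    μ {ω | k ≤ #(T.filter (· ∈ E ω))} ≤ ENNReal.ofReal ((#T).choose k * p ^ k) := by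
  have hcover :
      {ω | k ≤ #(T.filter (· ∈ E ω))} ⊆ ⋃ A ∈ T.powersetCard k, {ω | A ⊆ E ω} := by
    intro ω hω
    obtain ⟨A, hA, hcard⟩ := exists_subset_card_eq hω
    exact Set.mem_biUnion (mem_powersetCard.2 ⟨hA.trans (filter_subset _ _), hcard⟩)
      fun x hx => (mem_filter.1 (hA hx)).2
  calc μ {ω | k ≤ #(T.filter (· ∈ E ω))}
      ≤ ∑ A ∈ T.powersetCard k, μ {ω | A ⊆ E ω} :=
        (measure_mono hcover).trans (measure_biUnion_finset_le _ _)
    _ ≤ ∑ A ∈ T.powersetCard k, ENNReal.ofReal (p ^ k) :=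
        sum_le_sum fun A hA => (mem_powersetCard.1 hA).2 ▸ hls A
    _ = ENNReal.ofReal ((#T).choose k * p ^ k) := by
        rw [sum_const, card_powersetCard, nsmul_eq_mul, ENNReal.ofReal_mul (Nat.cast_nonneg _),
          ENNReal.ofReal_natCast]

theorem cluster_error_probability_at_vertex_general {V : Type*} [Fintype V] [DecidableEq V]
    (G : SimpleGraph V) [DecidableRel G.Adj] (z : ℕ)
    (hdeg : ∀ u, G.degree u ≤ z) (v : V)
    {Ω : Type*} [MeasurableSpace Ω] (μ : Measure Ω)
    (E : Ω → Finset V) (p : ℝ) (hp0 : 0 < p) (hp1 : p < 1)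
    (hls : ∀ A : Finset V, μ {ω | A ⊆ E ω} ≤ ENNReal.ofReal (p ^ A.card))
    (d : ℕ)
    (hthr : 2 * (z : ℝ) * Real.exp 1 * Real.sqrt p < 1) :
    μ {ω | ∃ T : Finset V, v ∈ T ∧
        (∀ x ∈ T, ∀ y ∈ T, ∃ w : G.Walk x y, ∀ u ∈ w.support, u ∈ T) ∧
        d ≤ T.card ∧ (T.card + 1) / 2 ≤ (T.filter (fun u => u ∈ E ω)).card}
      ≤ ENNReal.ofReal (∑' s : ℕ,
          if d ≤ s then ((z : ℝ) * Real.exp 1) ^ (s - 1) * 2 ^ s * Real.sqrt p ^ s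
          else 0) ∧
    Summable (fun s : ℕ =>
        if d ≤ s then ((z : ℝ) * Real.exp 1) ^ (s - 1) * 2 ^ s * Real.sqrt p ^ s
        else 0) := by
  have hsum := summable_ite_pow_sub_one_mul (c := z * Real.exp 1) (by positivity)
    (Real.sqrt_nonneg p) (by simpa only [mul_assoc] using hthr) d
  refine ⟨?_, hsum⟩
  classical
  set 𝒞 := univ.filter fun T : Finset V => v ∈ T ∧ G.ConnectedOn T ∧ d ≤ #T
  calc _ ≤ μ (⋃ T ∈ 𝒞, {ω | (#T + 1) / 2 ≤ #(T.filter (· ∈ E ω))}) :=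
        measure_mono fun ω hω => by
          obtain ⟨T, hvT, hconn, hdT, hk⟩ := hω
          exact Set.mem_biUnion (mem_filter.2 ⟨mem_univ T, hvT, hconn, hdT⟩) hk
    _ ≤ ∑ T ∈ 𝒞, μ {ω | (#T + 1) / 2 ≤ #(T.filter (· ∈ E ω))} :=
        measure_biUnion_finset_le _ _
    _ ≤ ∑ T ∈ 𝒞, ENNReal.ofReal (2 ^ #T * Real.sqrt p ^ #T) := sum_le_sum fun T _ =>
        (measure_setOf_le_card_filter_le hls T _).trans
          (ENNReal.ofReal_le_ofReal (choose_mul_pow_half_le hp0.le hp1.le _))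
    _ = ENNReal.ofReal (∑ T ∈ 𝒞, 2 ^ #T * Real.sqrt p ^ #T) :=
        (ENNReal.ofReal_sum_of_nonneg fun T _ => by positivity).symm
    _ ≤ _ := ENNReal.ofReal_le_ofReal
        (G.sum_two_pow_mul_pow_card_le_tsum hdeg (Real.sqrt_nonneg p) hsum
          fun T hT => (mem_filter.1 hT).2)

/-- For a fixed vertex `v` in a graph of maximum degree `z` with local
stochastic noise at rate `p`, the probability that some connected cluster of
size `s ≥ d` containing `v` has at least `⌈s/2⌉` erroneous vertices is at
most `∑_{s ≥ d} (z e)^(s-1) 2^s p^(s/2)`, and this series converges when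
`2 z e √p < 1`. -/
theorem cluster_error_probability_at_vertex {V : Type*} [Fintype V] [DecidableEq V]
    (G : SimpleGraph V) [DecidableRel G.Adj] (z : ℕ) (hz : 1 ≤ z)
    (hdeg : ∀ u, G.degree u ≤ z) (v : V)
    {Ω : Type*} [MeasurableSpace Ω] (μ : Measure Ω) [IsProbabilityMeasure μ]
    (E : Ω → Finset V) (p : ℝ) (hp0 : 0 < p) (hp1 : p < 1)
    (hls : ∀ A : Finset V, μ {ω | A ⊆ E ω} ≤ ENNReal.ofReal (p ^ A.card))
    (d : ℕ) (hd : 1 ≤ d)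
    (hthr : 2 * (z : ℝ) * Real.exp 1 * Real.sqrt p < 1) :
    μ {ω | ∃ T : Finset V, v ∈ T ∧
        (∀ x ∈ T, ∀ y ∈ T, ∃ w : G.Walk x y, ∀ u ∈ w.support, u ∈ T) ∧
        d ≤ T.card ∧ (T.card + 1) / 2 ≤ (T.filter (fun u => u ∈ E ω)).card}
      ≤ ENNReal.ofReal (∑' s : ℕ,
          if d ≤ s then ((z : ℝ) * Real.exp 1) ^ (s - 1) * 2 ^ s * Real.sqrt p ^ s
          else 0) ∧
    Summable (fun s : ℕ =>
        if d ≤ s then ((z : ℝ) * Real.exp 1) ^ (s - 1) * 2 ^ s * Real.sqrt p ^ s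
        else 0) :=
  cluster_error_probability_at_vertex_general G z hdeg v μ E p hp0 hp1 hls d hthr
end

section
/- Suppose the minimum-weight decoder fails (produces a logical error) on a code with adjacency graph G and distance d. Then there exists a connected cluster S in G of size s ≥ d such that the actual error acts nontrivially on at least ⌈s/2⌉ qubits of S. -/
/-- Pauli operators on `n` qubits modulo phase, in the symplectic picture. -/
abbrev PauliVec (n : ℕ) := Fin n → ZMod 2 × ZMod 2

/-- The symplectic form; two Paulis commute iff it vanishes. -/
def sympl {n : ℕ} (a b : PauliVec n) : ZMod 2 :=
  ∑ i, ((a i).1 * (b i).2 + (a i).2 * (b i).1)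

/-- Weight of a Pauli operator. -/
def pwt {n : ℕ} (a : PauliVec n) : ℕ :=
  (Finset.univ.filter fun i => a i ≠ 0).card

/-!
The failure `G = E + F` is a logical operator. Cut its support into connected components of
the adjacency graph: a generator touching one component touches no other qubit of `supp G`, so
each piece `G|_S` still commutes with all generators, and since `G ∉ Q` some piece is itself
logical, whence `|S| = wt (G|_S) ≥ d`. Replacing `E` by `F` on `S` is the correction
`E + G|_S`, which has the same syndrome, so minimality of `E` gives `wt (E|_S) ≤ wt (F|_S)`;
as `S ⊆ supp E ∪ supp F`, at least half of `S` lies in `supp F`.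
-/

section

open Finset Relation

variable {n : ℕ} {ι : Type*}

lemma sympl_add_right (a b c : PauliVec n) : sympl a (b + c) = sympl a b + sympl a c := by
  simp only [sympl, ← Finset.sum_add_distrib, Pi.add_apply, Prod.fst_add, Prod.snd_add]
  exact Finset.sum_congr rfl fun i _ => by ring

def psupp (H : PauliVec n) : Finset (Fin n) :=
  univ.filter fun i => H i ≠ 0

lemma mem_psupp {H : PauliVec n} {i : Fin n} : i ∈ psupp H ↔ H i ≠ 0 := by
  simp [psupp]

lemma mem_psupp_indicator {H : PauliVec n} {s : Set (Fin n)} {i : Fin n} :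
    i ∈ psupp (s.indicator H) ↔ i ∈ s ∧ i ∈ psupp H := by
  by_cases hi : i ∈ s <;> simp [mem_psupp, hi]

lemma pwt_indicator_of_subset {H : PauliVec n} {S : Finset (Fin n)} (hS : S ⊆ psupp H) :
    pwt ((S : Set (Fin n)).indicator H) = S.card := by
  refine congrArg Finset.card (Finset.ext fun i => ?_)
  rw [← psupp, mem_psupp_indicator, mem_coe]
  exact ⟨And.left, fun hi => ⟨hi, hS hi⟩⟩

lemma pwt_eq_card_filter_add_card_filter_compl (X : PauliVec n) (S : Finset (Fin n)) :
    pwt X = (S.filter fun i => X i ≠ 0).card + (Sᶜ.filter fun i => X i ≠ 0).card := by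
  rw [pwt, ← card_union_of_disjoint (disjoint_filter_filter disjoint_compl_right),
    ← filter_union, union_compl]

lemma sympl_indicator_eq_zero {a H : PauliVec n} {S : Finset (Fin n)} (hH : sympl a H = 0)
    (hS : (∃ j ∈ S, a j ≠ 0) → ∀ i, a i ≠ 0 → H i ≠ 0 → i ∈ S) :
    sympl a ((S : Set (Fin n)).indicator H) = 0 := by
  by_cases hmeet : ∃ j ∈ S, a j ≠ 0
  · rw [← hH]
    refine Finset.sum_congr rfl fun i _ => ?_
    by_cases hi : i ∈ S
    · simp [hi]
    · obtain h | h : a i = 0 ∨ H i = 0 := by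
        by_contra! h
        exact hi (hS hmeet i h.1 h.2)
      all_goals simp [hi, h]
  · push Not at hmeet
    refine Finset.sum_eq_zero fun i _ => ?_
    by_cases hi : i ∈ S <;> simp [hi, hmeet]

section Cluster

variable (gens : ι → PauliVec n)

def clusterAdj (T : Finset (Fin n)) (i j : Fin n) : Prop :=
  i ∈ T ∧ j ∈ T ∧ i ≠ j ∧ ∃ b, gens b i ≠ 0 ∧ gens b j ≠ 0

def IsConnectedCluster (S : Finset (Fin n)) : Prop :=
  ∀ x ∈ S, ∀ y ∈ S, ReflTransGen (clusterAdj gens S) x y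

instance (T : Finset (Fin n)) : Std.Symm (clusterAdj gens T) :=
  ⟨fun _ _ ⟨hi, hj, hij, b, hbi, hbj⟩ => ⟨hj, hi, hij.symm, b, hbj, hbi⟩⟩

open Classical in
noncomputable def component (T : Finset (Fin n)) (i₀ : Fin n) : Finset (Fin n) :=
  T.filter (ReflTransGen (clusterAdj gens T) i₀)

variable {gens} {T : Finset (Fin n)} {i₀ : Fin n}

lemma mem_component {i : Fin n} :
    i ∈ component gens T i₀ ↔ i ∈ T ∧ ReflTransGen (clusterAdj gens T) i₀ i := by
  simp [component]

lemma component_subset : component gens T i₀ ⊆ T :=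
  fun _ hi => (mem_component.mp hi).1

lemma self_mem_component (h : i₀ ∈ T) : i₀ ∈ component gens T i₀ :=
  mem_component.mpr ⟨h, .refl⟩

lemma mem_component_of_gen {b : ι} {i j : Fin n} (hj : j ∈ component gens T i₀)
    (hbj : gens b j ≠ 0) (hbi : gens b i ≠ 0) (hi : i ∈ T) : i ∈ component gens T i₀ := by
  obtain rfl | hij := eq_or_ne j i
  · exact hj
  obtain ⟨hjT, hpath⟩ := mem_component.mp hj
  exact mem_component.mpr ⟨hi, hpath.tail ⟨hjT, hi, hij, b, hbj, hbi⟩⟩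

lemma isConnectedCluster_component : IsConnectedCluster gens (component gens T i₀) := by
  have hfrom : ∀ x, ReflTransGen (clusterAdj gens T) i₀ x →
      ReflTransGen (clusterAdj gens (component gens T i₀)) i₀ x := by
    intro x hx
    induction hx with
    | refl => exact .refl
    | @tail j k hj hjk ih =>
      exact ih.tail ⟨mem_component.mpr ⟨hjk.1, hj⟩, mem_component.mpr ⟨hjk.2.1, hj.tail hjk⟩,
        hjk.2.2⟩
  intro x hx y hy
  exact (Std.Symm.symm _ _ (hfrom x (mem_component.mp hx).2)).trans
    (hfrom y (mem_component.mp hy).2)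

end Cluster

section Logical

variable {gens : ι → PauliVec n} {Q : Submodule (ZMod 2) (PauliVec n)}

variable (gens Q) in
def IsLogical (H : PauliVec n) : Prop :=
  (∀ b, sympl (gens b) H = 0) ∧ H ∉ Q

lemma sympl_indicator_component_eq_zero {H : PauliVec n} {i₀ : Fin n}
    (hH : ∀ b, sympl (gens b) H = 0) (b : ι) :
    sympl (gens b) ((component gens (psupp H) i₀ : Set (Fin n)).indicator H) = 0 :=
  sympl_indicator_eq_zero (hH b) fun ⟨_, hj, hbj⟩ _ hbi hHi =>
    mem_component_of_gen hj hbj hbi (mem_psupp.mpr hHi)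

theorem IsLogical.exists_isConnectedCluster {H : PauliVec n} (hH : IsLogical gens Q H) :
    ∃ S : Finset (Fin n), IsConnectedCluster gens S ∧ S ⊆ psupp H ∧
      IsLogical gens Q ((S : Set (Fin n)).indicator H) := by
  induction hw : pwt H using Nat.strong_induction_on generalizing H with
  | _ w ih =>
  obtain ⟨i₀, hi₀⟩ := Function.ne_iff.mp fun h : H = 0 => hH.2 (h ▸ Q.zero_mem)
  replace hi₀ : i₀ ∈ psupp H := mem_psupp.mpr hi₀
  set S := component gens (psupp H) i₀
  have hS : ∀ b, sympl (gens b) ((S : Set (Fin n)).indicator H) = 0 :=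
    sympl_indicator_component_eq_zero hH.1
  by_cases hSQ : (S : Set (Fin n)).indicator H ∈ Q
  swap
  · exact ⟨S, isConnectedCluster_component, component_subset, hS, hSQ⟩
  -- Otherwise the part of `H` off the cluster is a lighter logical operator.
  set H' := (S : Set (Fin n))ᶜ.indicator H
  have hsplit : (S : Set (Fin n)).indicator H + H' = H := Set.indicator_self_add_compl _ _
  have hH' : IsLogical gens Q H' := by
    refine ⟨fun b => ?_, fun h => hH.2 (hsplit ▸ Q.add_mem hSQ h)⟩
    have hHb := hH.1 b
    rwa [← hsplit, sympl_add_right, hS, zero_add] at hHb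
  have hsub : psupp H' ⊆ psupp H := fun i hi => (mem_psupp_indicator.mp hi).2
  have hlt : pwt H' < w := by
    refine hw ▸ card_lt_card ((ssubset_iff_of_subset hsub).mpr ⟨i₀, hi₀, fun h => ?_⟩)
    exact (mem_psupp_indicator.mp h).1 (self_mem_component hi₀)
  obtain ⟨S', hconn, hS'H', hlog⟩ := ih _ hlt hH' rfl
  have hS'S : (S' : Set (Fin n)) ⊆ (S : Set (Fin n))ᶜ :=
    fun i hi => (mem_psupp_indicator.mp (hS'H' hi)).1
  refine ⟨S', hconn, hS'H'.trans hsub, ?_⟩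
  rwa [Set.indicator_indicator, Set.inter_eq_left.mpr hS'S] at hlog

end Logical

lemma piecewise_eq_add_indicator_add (E F : PauliVec n) (S : Finset (Fin n)) :
    S.piecewise F E = E + (S : Set (Fin n)).indicator (E + F) := by
  funext i
  by_cases hi : i ∈ S
  · simp [hi, ← add_assoc, ZModModule.add_self]
  · simp [hi]

lemma card_filter_le_of_pwt_le_piecewise {E F : PauliVec n} {S : Finset (Fin n)}
    (h : pwt E ≤ pwt (S.piecewise F E)) :
    (S.filter fun i => E i ≠ 0).card ≤ (S.filter fun i => F i ≠ 0).card := by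
  have hE := pwt_eq_card_filter_add_card_filter_compl E S
  have hE' := pwt_eq_card_filter_add_card_filter_compl (S.piecewise F E) S
  have hin : S.filter (fun i => S.piecewise F E i ≠ 0) = S.filter fun i => F i ≠ 0 :=
    filter_congr fun i hi => by rw [S.piecewise_eq_of_mem _ _ hi]
  have hout : Sᶜ.filter (fun i => S.piecewise F E i ≠ 0) = Sᶜ.filter fun i => E i ≠ 0 :=
    filter_congr fun i hi => by rw [S.piecewise_eq_of_notMem _ _ (mem_compl.mp hi)]
  rw [hin, hout] at hE'
  omega

lemma card_le_card_filter_add_card_filter {E F : PauliVec n} {S : Finset (Fin n)}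
    (hS : S ⊆ psupp (E + F)) :
    S.card ≤ (S.filter fun i => E i ≠ 0).card + (S.filter fun i => F i ≠ 0).card := by
  calc S.card = (S.filter fun i => E i ≠ 0 ∨ F i ≠ 0).card := by
        refine congrArg card (filter_true_of_mem fun i hi => ?_).symm
        by_contra! h
        exact mem_psupp.mp (hS hi) (by simp [h])
    _ ≤ _ := by rw [filter_or]; exact card_union_le _ _

end

theorem decoder_failure_cluster_general {n : ℕ} {ι : Type*}
    (gens : ι → PauliVec n) (d : ℕ)
    (Q : Submodule (ZMod 2) (PauliVec n))
    (hdist : ∀ g : PauliVec n, (∀ b, sympl (gens b) g = 0) → g ∉ Q → d ≤ pwt g)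
    (E F : PauliVec n)
    (hsynd : ∀ b, sympl (gens b) E = sympl (gens b) F)
    (hmin : ∀ E' : PauliVec n,
      (∀ b, sympl (gens b) E' = sympl (gens b) F) → pwt E ≤ pwt E')
    (hfail : E + F ∉ Q) :
    ∃ S : Finset (Fin n),
      (∀ x ∈ S, ∀ y ∈ S, Relation.ReflTransGen
          (fun i j => i ∈ S ∧ j ∈ S ∧ i ≠ j ∧ ∃ b, gens b i ≠ 0 ∧ gens b j ≠ 0)
          x y) ∧
      d ≤ S.card ∧
      (S.card + 1) / 2 ≤ (S.filter fun i => F i ≠ 0).card := by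
  have hG : IsLogical gens Q (E + F) :=
    ⟨fun b => by rw [sympl_add_right, hsynd, ZModModule.add_self], hfail⟩
  obtain ⟨S, hconn, hSG, hGS⟩ := hG.exists_isConnectedCluster
  refine ⟨S, hconn, pwt_indicator_of_subset hSG ▸ hdist _ hGS.1 hGS.2, ?_⟩
  have hE_le_F := card_filter_le_of_pwt_le_piecewise <| hmin _ fun b => by
    rw [piecewise_eq_add_indicator_add, sympl_add_right, hGS.1, add_zero, hsynd]
  have hcover := card_le_card_filter_add_card_filter hSG
  omega

/-- If the minimum-weight decoder fails on a stabilizer code of distance `d`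
(i.e. the deduced error `E` has the same syndrome as the actual error `F`,
is of minimum weight among errors with that syndrome, and `G = E·F` is a
nontrivial logical operator), then there is a connected cluster `S` in the
adjacency graph of the code of size `s ≥ d` containing at least `⌈s/2⌉`
qubits in the support of the actual error `F`. -/
theorem decoder_failure_cluster {n : ℕ} {ι : Type*} [Fintype ι]
    (gens : ι → PauliVec n) (d : ℕ)
    (Q : Submodule (ZMod 2) (PauliVec n))
    (hQ : Q = Submodule.span (ZMod 2) (Set.range gens))
    (hdist : ∀ g : PauliVec n, (∀ b, sympl (gens b) g = 0) → g ∉ Q → d ≤ pwt g)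
    (E F : PauliVec n)
    (hsynd : ∀ b, sympl (gens b) E = sympl (gens b) F)
    (hmin : ∀ E' : PauliVec n,
      (∀ b, sympl (gens b) E' = sympl (gens b) F) → pwt E ≤ pwt E')
    (hfail : E + F ∉ Q) :
    ∃ S : Finset (Fin n),
      (∀ x ∈ S, ∀ y ∈ S, Relation.ReflTransGen
          (fun i j => i ∈ S ∧ j ∈ S ∧ i ≠ j ∧ ∃ b, gens b i ≠ 0 ∧ gens b j ≠ 0)
          x y) ∧
      d ≤ S.card ∧
      (S.card + 1) / 2 ≤ (S.filter fun i => F i ≠ 0).card :=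
  decoder_failure_cluster_general gens d Q hdist E F hsynd hmin hfail
end
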